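/- arXiv:math/0105091 — 14 statements merged into one kernel-verified Lean document; each statement's English description precedes it below -/
import Mathlib

section
/- Let n be a positive integer and let f : (ℝ_{>0})^n → (ℝ_{>0})^n be a homogeneous, monotone function. If the associated directed graph G(f) is strongly connected, then f has an eigenvector in (ℝ_{>0})^n, i.e. there exist x ∈ (ℝ_{>0})^n and λ > 0 with f(x) = λx. -/
/-- The vector whose `j`-th coordinate is `u` and whose other coordinates are `1`. -/
def uVec {n : ℕ} (j : Fin n) (u : ℝ) : Fin n → ℝ := fun k => if k = j then u else 1

/-- Edge `i → j` in the graph `G(f)` associated to a homogeneous monotone `f`: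
the monotone function `u ↦ f_i(u_{{j}})` (for `u > 0`) is unbounded above,
equivalently `lim_{u → ∞} f_i(u_{{j}}) = ∞`. -/
def GraphEdge {n : ℕ} (f : (Fin n → ℝ) → (Fin n → ℝ)) (i j : Fin n) : Prop :=
  ∀ M : ℝ, ∃ u : ℝ, 0 < u ∧ M ≤ f (uVec j u) i

namespace GPF

variable {n : ℕ} {f : (Fin n → ℝ) → (Fin n → ℝ)}

/-- The log-exp conjugate of `f`. -/
noncomputable def Fm (f : (Fin n → ℝ) → (Fin n → ℝ)) (x : Fin n → ℝ) (i : Fin n) : ℝ :=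
  Real.log (f (fun j => Real.exp (x j)) i)

theorem exp_Fm (hmaps : ∀ x : Fin n → ℝ, (∀ i, 0 < x i) → ∀ i, 0 < f x i)
    (x : Fin n → ℝ) (i : Fin n) :
    Real.exp (Fm f x i) = f (fun j => Real.exp (x j)) i :=
  Real.exp_log (hmaps _ (fun j => Real.exp_pos _) i)

theorem Fm_le (hmaps : ∀ x : Fin n → ℝ, (∀ i, 0 < x i) → ∀ i, 0 < f x i)
    (hmono : ∀ x y : Fin n → ℝ, (∀ i, 0 < x i) → (∀ i, 0 < y i) → x ≤ y → f x ≤ f y)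
    {x y : Fin n → ℝ} (h : ∀ k, x k ≤ y k) (i : Fin n) :
    Fm f x i ≤ Fm f y i := by
  have hle : f (fun j => Real.exp (x j)) ≤ f (fun j => Real.exp (y j)) :=
    hmono _ _ (fun j => Real.exp_pos _) (fun j => Real.exp_pos _)
      (fun j => Real.exp_le_exp.2 (h j))
  exact Real.log_le_log (hmaps _ (fun j => Real.exp_pos _) i) (hle i)

theorem Fm_shift (hmaps : ∀ x : Fin n → ℝ, (∀ i, 0 < x i) → ∀ i, 0 < f x i)
    (hhom : ∀ c : ℝ, 0 < c → ∀ x : Fin n → ℝ, (∀ i, 0 < x i) → f (c • x) = c • f x)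
    (x : Fin n → ℝ) (c : ℝ) (i : Fin n) :
    Fm f (fun j => x j + c) i = Fm f x i + c := by
  have hx : ∀ j, (0:ℝ) < Real.exp (x j) := fun j => Real.exp_pos _
  have h1 : (fun j => Real.exp (x j + c)) = (Real.exp c) • (fun j => Real.exp (x j)) := by
    funext j
    simp [Real.exp_add, Pi.smul_apply, smul_eq_mul]
    ring
  have h2 : f (fun j => Real.exp (x j + c)) = (Real.exp c) • f (fun j => Real.exp (x j)) := by
    rw [h1, hhom (Real.exp c) (Real.exp_pos c) _ hx]
  unfold Fm
  rw [h2]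
  rw [Pi.smul_apply, smul_eq_mul, Real.log_mul (Real.exp_ne_zero c)
    (ne_of_gt (hmaps _ hx i)), Real.log_exp]
  ring

theorem Fm_le_shift (hmaps : ∀ x : Fin n → ℝ, (∀ i, 0 < x i) → ∀ i, 0 < f x i)
    (hhom : ∀ c : ℝ, 0 < c → ∀ x : Fin n → ℝ, (∀ i, 0 < x i) → f (c • x) = c • f x)
    (hmono : ∀ x y : Fin n → ℝ, (∀ i, 0 < x i) → (∀ i, 0 < y i) → x ≤ y → f x ≤ f y)
    {x y : Fin n → ℝ} {c : ℝ} (h : ∀ k, x k ≤ y k + c) (i : Fin n) :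
    Fm f x i ≤ Fm f y i + c := by
  have := Fm_le hmaps hmono h i
  rwa [Fm_shift hmaps hhom y c i] at this

/-- Propagation of largeness along a path in the graph, inside an upper slice. -/
theorem threshold (hmaps : ∀ x : Fin n → ℝ, (∀ i, 0 < x i) → ∀ i, 0 < f x i)
    (hmono : ∀ x y : Fin n → ℝ, (∀ i, 0 < x i) → (∀ i, 0 < y i) → x ≤ y → f x ≤ f y)
    {μ : ℝ} (hμ : 0 < μ) {i j : Fin n}
    (hpath : Relation.ReflTransGen (GraphEdge f) i j) (B : ℝ) :
    ∃ T : ℝ, ∀ x : Fin n → ℝ, (∀ k, 1 ≤ x k) → (∀ k, f x k ≤ μ * x k) →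
      T ≤ x j → B ≤ x i := by
  induction hpath using Relation.ReflTransGen.head_induction_on generalizing B with
  | refl => exact ⟨B, fun x _ _ hT => hT⟩
  | head hedge _ ih =>
    rename_i a c _
    obtain ⟨u, hu0, huB⟩ := hedge (μ * B)
    obtain ⟨T, hT⟩ := ih u
    refine ⟨T, fun x hx1 hsl hxj => ?_⟩
    have hxc : u ≤ x c := hT x hx1 hsl hxj
    have hpos : ∀ k, (0:ℝ) < uVec c u k := by
      intro k; unfold uVec; split
      · exact hu0
      · norm_num
    have hle : uVec c u ≤ x := by
      intro k
      show (if k = c then u else 1) ≤ x k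
      split
      · subst_eqs; exact hxc
      · exact hx1 k
    have := hmono _ x hpos (fun k => lt_of_lt_of_le one_pos (hx1 k)) hle a
    have h2 : μ * B ≤ μ * x a := le_trans huB (le_trans this (hsl a))
    exact le_of_mul_le_mul_left h2 hμ

theorem sliceBound (hn : 0 < n)
    (hmaps : ∀ x : Fin n → ℝ, (∀ i, 0 < x i) → ∀ i, 0 < f x i)
    (hmono : ∀ x y : Fin n → ℝ, (∀ i, 0 < x i) → (∀ i, 0 < y i) → x ≤ y → f x ≤ f y)
    (hconn : ∀ i j : Fin n, Relation.ReflTransGen (GraphEdge f) i j)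
    {μ : ℝ} (hμ : 0 < μ) :
    ∃ C : ℝ, 1 ≤ C ∧ ∀ x : Fin n → ℝ, (∀ k, 1 ≤ x k) → (∀ k, f x k ≤ μ * x k) →
      ∀ k₀, x k₀ = 1 → ∀ j, x j ≤ C := by
  haveI : Nonempty (Fin n) := ⟨⟨0, hn⟩⟩
  have hQ : ∀ i j : Fin n, ∀ B : ℝ, ∃ T : ℝ, ∀ x : Fin n → ℝ,
      (∀ k, 1 ≤ x k) → (∀ k, f x k ≤ μ * x k) → T ≤ x j → B ≤ x i :=
    fun i j B => threshold hmaps hmono hμ (hconn i j) B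
  choose T hT using hQ
  obtain ⟨C₀, hC₀⟩ : ∃ C₀ : ℝ, ∀ p : Fin n × Fin n, T p.1 p.2 2 ≤ C₀ :=
    ⟨Finset.univ.sup' Finset.univ_nonempty (fun p : Fin n × Fin n => T p.1 p.2 2),
      fun p => Finset.le_sup' (fun p : Fin n × Fin n => T p.1 p.2 2) (Finset.mem_univ p)⟩
  refine ⟨max 1 C₀, le_max_left _ _, fun x hx1 hsl k₀ hk₀ j => ?_⟩
  by_contra hcon
  push_neg at hcon
  have h2 : (2:ℝ) ≤ x k₀ := hT k₀ j 2 x hx1 hsl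
    (le_of_lt (lt_of_le_of_lt (le_trans (hC₀ (k₀, j)) (le_max_right 1 C₀)) hcon))
  rw [hk₀] at h2
  norm_num at h2

theorem minmax (hn : 0 < n)
    (hmaps : ∀ x : Fin n → ℝ, (∀ i, 0 < x i) → ∀ i, 0 < f x i)
    (hhom : ∀ c : ℝ, 0 < c → ∀ x : Fin n → ℝ, (∀ i, 0 < x i) → f (c • x) = c • f x)
    (hmono : ∀ x y : Fin n → ℝ, (∀ i, 0 < x i) → (∀ i, 0 < y i) → x ≤ y → f x ≤ f y)
    {m0 M0 : ℝ} (hm0 : ∀ i, m0 ≤ Fm f 0 i) (hM0 : ∀ i, Fm f 0 i ≤ M0)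
    (x : Fin n → ℝ) :
    (∃ p, Fm f x p - x p ≤ M0) ∧ (∃ q, m0 ≤ Fm f x q - x q) := by
  haveI : Nonempty (Fin n) := ⟨⟨0, hn⟩⟩
  constructor
  · obtain ⟨p, -, hp⟩ := Finset.exists_max_image Finset.univ x Finset.univ_nonempty
    refine ⟨p, ?_⟩
    have h1 : ∀ k, x k ≤ (0 : Fin n → ℝ) k + x p := by
      intro k; have := hp k (Finset.mem_univ k); simpa using this
    have h2 := Fm_le_shift hmaps hhom hmono h1 p
    have := hM0 p; linarith
  · obtain ⟨q, -, hq⟩ := Finset.exists_min_image Finset.univ x Finset.univ_nonempty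
    refine ⟨q, ?_⟩
    have h1 : ∀ k, (0 : Fin n → ℝ) k ≤ x k + (-(x q)) := by
      intro k; have := hq k (Finset.mem_univ k); simp only [Pi.zero_apply]; linarith
    have h2 := Fm_le_shift hmaps hhom hmono h1 q
    have := hm0 q; linarith


set_option maxHeartbeats 2000000 in
theorem approx {n : ℕ} {f : (Fin n → ℝ) → (Fin n → ℝ)} (hn : 0 < n)
    (hmaps : ∀ x : Fin n → ℝ, (∀ i, 0 < x i) → ∀ i, 0 < f x i)
    (hhom : ∀ c : ℝ, 0 < c → ∀ x : Fin n → ℝ, (∀ i, 0 < x i) → f (c • x) = c • f x)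
    (hmono : ∀ x y : Fin n → ℝ, (∀ i, 0 < x i) → (∀ i, 0 < y i) → x ≤ y → f x ≤ f y)
    {m0 M0 C : ℝ}
    (hm0 : ∀ i, m0 ≤ Fm f 0 i) (hM0 : ∀ i, Fm f 0 i ≤ M0) (hC1 : 1 ≤ C)
    (hC : ∀ x : Fin n → ℝ, (∀ k, 1 ≤ x k) →
      (∀ k, f x k ≤ Real.exp (M0 + 3*(M0 - m0)) * x k) → ∀ k₀, x k₀ = 1 → ∀ j, x j ≤ C)
    {ε : ℝ} (hε : 0 < ε) :
    ∃ z : Fin n → ℝ, (∀ i, 0 ≤ z i ∧ z i ≤ Real.log C) ∧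
      ∀ i i' : Fin n, |(Fm f z i - z i) - (Fm f z i' - z i')| ≤ ε := by
  haveI : Nonempty (Fin n) := ⟨⟨0, hn⟩⟩
  have hd₀ : 0 ≤ M0 - m0 := by
    have h1 := hm0 ⟨0, hn⟩; have h2 := hM0 ⟨0, hn⟩; linarith
  set d₀ := M0 - m0 with hd₀def
  set D := Real.log C with hDdef
  have hD0 : 0 ≤ D := Real.log_nonneg hC1
  -- choose a contraction factor t
  obtain ⟨t, ht_half, ht1, hslack⟩ : ∃ t : ℝ, 1/2 ≤ t ∧ t < 1 ∧ 2*(1-t)*D ≤ ε/2 := by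
    by_cases hc : ε/(4*(D+1)) ≤ 1/2
    · refine ⟨1 - ε/(4*(D+1)), by linarith, ?_, ?_⟩
      · have : 0 < ε/(4*(D+1)) := by positivity
        linarith
      · have h1 : (0:ℝ) < 4*(D+1) := by linarith
        have hr : ε/(4*(D+1)) * (4*(D+1)) = ε := div_mul_cancel₀ ε (ne_of_gt h1)
        have hr0 : (0:ℝ) ≤ ε/(4*(D+1)) := by positivity
        nlinarith
    · push_neg at hc
      refine ⟨1/2, le_refl _, by norm_num, ?_⟩
      have h1 : (0:ℝ) < 4*(D+1) := by linarith
      rw [div_lt_div_iff₀ (by norm_num : (0:ℝ) < 2) h1] at hc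
      nlinarith
  have ht0 : 0 < t := by linarith
  have htne : (1:ℝ) - t ≠ 0 := by
    intro h; rw [sub_eq_zero] at h; exact absurd h.symm (ne_of_lt ht1)
  obtain ⟨k₀, hk₀⟩ := exists_pow_lt_of_lt_one (show (0:ℝ) < ε/(4*(d₀+1)) by positivity) ht1
  set k := k₀ + 1 with hkdef
  -- the approximating iteration (opaque)
  obtain ⟨seq, hseq0, hseq⟩ : ∃ seq : ℕ → Fin n → ℝ, seq 0 = 0 ∧
      ∀ m i, seq (m+1) i = t * Fm f (seq m) i := by
    refine ⟨fun m => (fun (x : Fin n → ℝ) (i : Fin n) => t * Fm f x i)^[m] 0, rfl, fun m i => ?_⟩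
    show ((fun (x : Fin n → ℝ) (i : Fin n) => t * Fm f x i)^[m+1] 0) i = _
    rw [Function.iterate_succ_apply']
  -- geometric sums, made opaque
  obtain ⟨E, hE0, hErec, hEbd⟩ : ∃ E : ℕ → ℝ, E 0 = 0 ∧
      (∀ m, E (m+1) = E m + t^m * d₀) ∧ (∀ m, 0 ≤ E m ∧ (1-t) * E m = d₀ * (1 - t^m)) := by
    refine ⟨fun m => d₀ * (1 - t^m)/(1-t), by simp, fun m => ?_, fun m => ⟨?_, ?_⟩⟩
    · show d₀ * (1 - t^(m+1))/(1-t) = d₀ * (1 - t^m)/(1-t) + t^m * d₀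
      rw [pow_succ]; field_simp; ring
    · have h1 : t^m ≤ 1 := pow_le_one₀ ht0.le ht1.le
      have h2 : (0:ℝ) ≤ 1 - t^m := by linarith
      exact div_nonneg (mul_nonneg hd₀ h2) (by linarith)
    · show (1-t) * (d₀ * (1 - t^m)/(1-t)) = d₀ * (1-t^m)
      field_simp
  -- consecutive increments are exponentially flat
  have hstep : ∀ m : ℕ, ∃ a : ℝ, ∀ i,
      a ≤ seq (m+1) i - seq m i ∧ seq (m+1) i - seq m i ≤ a + t^m * d₀ := by
    intro m; induction m with
    | zero =>
      refine ⟨t * m0, fun i => ?_⟩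
      have h1 : seq 1 i = t * Fm f 0 i := by rw [hseq 0 i, hseq0]
      have h2 := hm0 i; have h3 := hM0 i
      rw [h1, hseq0]
      constructor
      · simp only [Pi.zero_apply, sub_zero]
        nlinarith
      · simp only [Pi.zero_apply, sub_zero, pow_zero]
        nlinarith
    | succ m ih =>
      obtain ⟨a, ha⟩ := ih
      refine ⟨t * a, fun i => ?_⟩
      have hub' : ∀ k2, seq (m+1) k2 ≤ seq m k2 + (a + t^m * d₀) := by
        intro k2; have := (ha k2).2; linarith
      have hlb' : ∀ k2, seq m k2 ≤ seq (m+1) k2 + (-a) := by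
        intro k2; have := (ha k2).1; linarith
      have hub := Fm_le_shift hmaps hhom hmono hub' i
      have hlb := Fm_le_shift hmaps hhom hmono hlb' i
      rw [hseq (m+1) i, hseq m i]
      have hpow : t^(m+1) = t^m * t := pow_succ t m
      constructor
      · nlinarith [pow_nonneg ht0.le m]
      · nlinarith [pow_nonneg ht0.le m]
  -- total displacement is bounded
  have htotal : ∀ m : ℕ, ∃ b : ℝ, ∀ i,
      b ≤ seq m i ∧ seq m i ≤ b + E m := by
    intro m; induction m with
    | zero =>
      refine ⟨0, fun i => ?_⟩
      rw [hseq0, hE0]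
      simp
    | succ m ih =>
      obtain ⟨b, hb⟩ := ih
      obtain ⟨a, ha⟩ := hstep m
      refine ⟨b + a, fun i => ?_⟩
      have h1 := (hb i).1; have h2 := (hb i).2
      have h3 := (ha i).1; have h4 := (ha i).2
      rw [hErec m]
      constructor
      · linarith
      · linarith
  obtain ⟨a, ha⟩ := hstep k
  obtain ⟨b, hb⟩ := htotal k
  set x := seq k with hxdef
  have htFx : ∀ i, t * (Fm f x i - x i) = seq (k+1) i - t * x i := by
    intro i; rw [hseq k i, ← hxdef]; ring
  have hpk0 : (0:ℝ) ≤ t^k := pow_nonneg ht0.le k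
  have hpk1 : t^k ≤ 1 := pow_le_one₀ ht0.le ht1.le
  -- first two-sided bound (using the geometric displacement bound)
  have hA : ∀ i, (a + (1-t)*b) ≤ t * (Fm f x i - x i) ∧
      t * (Fm f x i - x i) ≤ (a + (1-t)*b) + d₀ := by
    intro i
    have h1 := (ha i).1; have h2 := (ha i).2
    have h3 := (hb i).1; have h4 := (hb i).2
    have h5 : 0 ≤ (1-t) * (x i - b) := mul_nonneg (by linarith) (by linarith)
    have h6 : (1-t) * (x i - b) ≤ d₀ * (1 - t^k) := by
      have h7 := mul_le_mul_of_nonneg_left (show x i - b ≤ E k by linarith)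
        (show (0:ℝ) ≤ 1 - t by linarith)
      have hk2 := (hEbd k).2
      linarith
    rw [htFx i]
    constructor
    · nlinarith
    · nlinarith
  -- the upper slice bound
  have hub : ∀ i, Fm f x i - x i ≤ M0 + 3*d₀ := by
    obtain ⟨⟨p, hp⟩, -⟩ := minmax hn hmaps hhom hmono hm0 hM0 x
    intro i
    have h1 := (hA i).2
    have h2 := (hA p).1
    nlinarith [mul_le_mul_of_nonneg_left hp ht0.le]
  -- normalize
  obtain ⟨q, -, hq⟩ := Finset.exists_min_image Finset.univ x Finset.univ_nonempty
  obtain ⟨z, hzdef⟩ : ∃ z : Fin n → ℝ, z = fun i => x i - x q := ⟨_, rfl⟩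
  have hz : ∀ i, z i = x i - x q := fun i => by rw [hzdef]
  have hzx : z = fun j => x j + (-(x q)) := by rw [hzdef]; funext j; ring
  have hFz : ∀ i, Fm f z i = Fm f x i + (-(x q)) := by
    intro i; rw [hzx]; exact Fm_shift hmaps hhom x (-(x q)) i
  have hFzx : ∀ i, Fm f z i - z i = Fm f x i - x i := by
    intro i; rw [hFz i, hz i]; ring
  have hz0 : ∀ i, 0 ≤ z i := by
    intro i; have := hq i (Finset.mem_univ i); rw [hz i]; linarith
  have hzq : z q = 0 := by rw [hz q]; ring
  have hv1 : ∀ k2, 1 ≤ Real.exp (z k2) := fun k2 => Real.one_le_exp (hz0 k2)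
  have hvsl : ∀ k2, f (fun j => Real.exp (z j)) k2 ≤ Real.exp (M0 + 3*d₀) * Real.exp (z k2) := by
    intro k2
    rw [← exp_Fm hmaps z k2, ← Real.exp_add]
    exact Real.exp_le_exp.2 (by have := hub k2; have := hFzx k2; linarith)
  have hvC : ∀ j, Real.exp (z j) ≤ C :=
    hC (fun j => Real.exp (z j)) hv1 hvsl q
      (by show Real.exp (z q) = 1; rw [hzq]; exact Real.exp_zero)
  have hzD : ∀ j, z j ≤ D := by
    intro j
    have h2 := Real.log_le_log (Real.exp_pos _) (hvC j)
    rwa [Real.log_exp] at h2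
  -- second two-sided bound (using the connectivity bound D)
  have hA2 : ∀ i, (a + (1-t)*(x q)) ≤ t * (Fm f z i - z i) ∧
      t * (Fm f z i - z i) ≤ (a + (1-t)*(x q)) + (t^k * d₀ + (1-t)*D) := by
    intro i
    have h1 := (ha i).1; have h2 := (ha i).2
    have h3 : x q ≤ x i := hq i (Finset.mem_univ i)
    have h4 : x i ≤ x q + D := by have h := hzD i; rw [hz i] at h; linarith
    rw [hFzx i, htFx i]
    have h5 : 0 ≤ (1-t) * (x i - x q) := mul_nonneg (by linarith) (by linarith)
    have h6 : (1-t) * (x i - x q) ≤ (1-t) * D :=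
      mul_le_mul_of_nonneg_left (by linarith) (by linarith)
    constructor
    · nlinarith
    · nlinarith
  refine ⟨z, fun i => ⟨hz0 i, hzD i⟩, fun i i' => ?_⟩
  have h1 := (hA2 i).1; have h2 := (hA2 i).2
  have h3 := (hA2 i').1; have h4 := (hA2 i').2
  have hpk : t^k ≤ t^k₀ := by
    rw [hkdef, pow_succ]
    nlinarith [pow_nonneg ht0.le k₀]
  have hg : 2*(t^k * d₀ + (1-t)*D) ≤ ε := by
    have h5 : t^k * d₀ ≤ ε/(4*(d₀+1)) * d₀ :=
      mul_le_mul_of_nonneg_right (le_trans hpk hk₀.le) hd₀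
    have h6 : ε/(4*(d₀+1)) * d₀ ≤ ε/4 := by
      rw [div_mul_eq_mul_div, div_le_div_iff₀ (by positivity) (by norm_num : (0:ℝ) < 4)]
      nlinarith
    nlinarith
  rw [abs_le]
  constructor
  · nlinarith
  · nlinarith

end GPF

set_option maxHeartbeats 1000000

theorem generalised_perron_frobenius
    (n : ℕ) (hn : 0 < n) (f : (Fin n → ℝ) → (Fin n → ℝ))
    (hmaps : ∀ x : Fin n → ℝ, (∀ i, 0 < x i) → ∀ i, 0 < f x i)
    (hhom : ∀ c : ℝ, 0 < c → ∀ x : Fin n → ℝ, (∀ i, 0 < x i) → f (c • x) = c • f x)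
    (hmono : ∀ x y : Fin n → ℝ, (∀ i, 0 < x i) → (∀ i, 0 < y i) → x ≤ y → f x ≤ f y)
    (hconn : ∀ i j : Fin n, Relation.ReflTransGen (GraphEdge f) i j) :
    ∃ x : Fin n → ℝ, (∀ i, 0 < x i) ∧ ∃ lam : ℝ, 0 < lam ∧ f x = lam • x := by
  haveI : Nonempty (Fin n) := ⟨⟨0, hn⟩⟩
  set i₀ : Fin n := ⟨0, hn⟩ with hi₀
  set M0 : ℝ := Finset.univ.sup' Finset.univ_nonempty (GPF.Fm f 0) with hM0def
  set m0 : ℝ := Finset.univ.inf' Finset.univ_nonempty (GPF.Fm f 0) with hm0def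
  have hM0 : ∀ i, GPF.Fm f 0 i ≤ M0 :=
    fun i => Finset.le_sup' (GPF.Fm f 0) (Finset.mem_univ i)
  have hm0 : ∀ i, m0 ≤ GPF.Fm f 0 i :=
    fun i => Finset.inf'_le (GPF.Fm f 0) (Finset.mem_univ i)
  obtain ⟨C, hC1, hC⟩ := GPF.sliceBound hn hmaps hmono hconn
    (Real.exp_pos (M0 + 3*(M0 - m0)))
  set D : ℝ := Real.log C with hDdef
  -- a sequence of approximate eigenvectors
  have hap : ∀ m : ℕ, ∃ z : Fin n → ℝ, (∀ i, 0 ≤ z i ∧ z i ≤ D) ∧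
      ∀ i i' : Fin n, |(GPF.Fm f z i - z i) - (GPF.Fm f z i' - z i')| ≤ 1/(m+1) :=
    fun m => GPF.approx hn hmaps hhom hmono hm0 hM0 hC1 hC
      (by positivity : (0:ℝ) < 1/(m+1))
  choose z hzbd hzgap using hap
  set l : ℕ → ℝ := fun m => GPF.Fm f (z m) i₀ - z m i₀ with hldef
  have hone : ∀ m : ℕ, 1/((m:ℝ)+1) ≤ 1 := by
    intro m
    rw [div_le_one (by positivity)]
    have : (0:ℝ) ≤ (m:ℝ) := Nat.cast_nonneg m
    linarith
  have hlbd : ∀ m, m0 - 1 ≤ l m ∧ l m ≤ M0 + 1 := by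
    intro m
    obtain ⟨⟨p, hp⟩, ⟨q, hq⟩⟩ := GPF.minmax hn hmaps hhom hmono hm0 hM0 (z m)
    have h1 := abs_le.1 (hzgap m i₀ p)
    have h2 := abs_le.1 (hzgap m i₀ q)
    have h3 := hone m
    constructor
    · have := h2.1; simp only [hldef]; linarith
    · have := h1.2; simp only [hldef]; linarith
  -- compactness
  have hKc : IsCompact ((Set.Icc (0 : Fin n → ℝ) (fun _ => D)) ×ˢ
      (Set.Icc (m0 - 1) (M0 + 1))) := isCompact_Icc.prod isCompact_Icc
  have hmem : ∀ m : ℕ, ((z m, l m) : (Fin n → ℝ) × ℝ) ∈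
      (Set.Icc (0 : Fin n → ℝ) (fun _ => D)) ×ˢ (Set.Icc (m0 - 1) (M0 + 1)) := by
    intro m
    constructor
    · rw [Set.mem_Icc]
      exact ⟨fun i => (hzbd m i).1, fun i => (hzbd m i).2⟩
    · rw [Set.mem_Icc]
      exact ⟨(hlbd m).1, (hlbd m).2⟩
  obtain ⟨⟨zs, ls⟩, -, φ, hφ, hconv⟩ := hKc.tendsto_subseq hmem
  have hzt : Filter.Tendsto (fun m => z (φ m)) Filter.atTop (nhds zs) :=
    (continuous_fst.tendsto (zs, ls)).comp hconv
  have hlt : Filter.Tendsto (fun m => l (φ m)) Filter.atTop (nhds ls) :=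
    (continuous_snd.tendsto (zs, ls)).comp hconv
  -- coordinatewise nonexpansiveness of Fm
  have hLip : ∀ (x y : Fin n → ℝ) (i : Fin n), |GPF.Fm f x i - GPF.Fm f y i| ≤ dist x y := by
    intro x y i
    have hd : ∀ k, |x k - y k| ≤ dist x y := by
      intro k
      have h := dist_le_pi_dist x y k
      rwa [Real.dist_eq] at h
    rw [abs_sub_le_iff]
    constructor
    · have h1 : ∀ k, x k ≤ y k + dist x y := by
        intro k; have := (abs_le.1 (hd k)).2; linarith
      have := GPF.Fm_le_shift hmaps hhom hmono h1 i
      linarith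
    · have h1 : ∀ k, y k ≤ x k + dist x y := by
        intro k; have := (abs_le.1 (hd k)).1; linarith
      have := GPF.Fm_le_shift hmaps hhom hmono h1 i
      linarith
  -- the limit is an additive eigenvector of Fm
  have hkey : ∀ i, GPF.Fm f zs i = zs i + ls := by
    intro i
    have habs : ∀ ε : ℝ, 0 < ε → |GPF.Fm f zs i - zs i - ls| ≤ ε := by
      intro ε hε
      obtain ⟨N1, hN1⟩ := Metric.tendsto_atTop.1 hzt (ε/4) (by positivity)
      obtain ⟨N2, hN2⟩ := Metric.tendsto_atTop.1 hlt (ε/4) (by positivity)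
      obtain ⟨N3, hN3⟩ := exists_nat_gt (4/ε)
      set m := max N1 (max N2 N3) with hmdef
      have hm1 : N1 ≤ m := le_max_left _ _
      have hm2 : N2 ≤ m := le_trans (le_max_left _ _) (le_max_right _ _)
      have hm3 : N3 ≤ m := le_trans (le_max_right _ _) (le_max_right _ _)
      have h1 : dist (z (φ m)) zs < ε/4 := hN1 m hm1
      have h2 : |l (φ m) - ls| < ε/4 := by
        have := hN2 m hm2
        rwa [Real.dist_eq] at this
      have hφm : (m:ℝ) ≤ (φ m : ℝ) := by exact_mod_cast hφ.le_apply
      have h3 : |GPF.Fm f (z (φ m)) i - z (φ m) i - l (φ m)| ≤ ε/4 := by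
        have hg := hzgap (φ m) i i₀
        have hstep1 : 1/((φ m : ℝ)+1) ≤ ε/4 := by
          have hN3m : (N3:ℝ) ≤ (φ m : ℝ) := le_trans (by exact_mod_cast hm3) hφm
          have hpos : (0:ℝ) < (φ m : ℝ) + 1 := by positivity
          rw [div_le_div_iff₀ hpos (by norm_num : (0:ℝ) < 4)]
          rw [div_lt_iff₀ hε] at hN3
          nlinarith
        exact le_trans hg hstep1
      have h4 : |GPF.Fm f zs i - GPF.Fm f (z (φ m)) i| ≤ ε/4 := by
        have := hLip zs (z (φ m)) i
        rw [dist_comm] at h1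
        linarith
      have h5 : |z (φ m) i - zs i| ≤ ε/4 := by
        have h := dist_le_pi_dist (z (φ m)) zs i
        rw [Real.dist_eq] at h
        linarith
      have e : GPF.Fm f zs i - zs i - ls =
          (GPF.Fm f zs i - GPF.Fm f (z (φ m)) i) +
          (GPF.Fm f (z (φ m)) i - z (φ m) i - l (φ m)) +
          (z (φ m) i - zs i) + (l (φ m) - ls) := by ring
      rw [e]
      have t1 := abs_add_le (GPF.Fm f zs i - GPF.Fm f (z (φ m)) i +
          (GPF.Fm f (z (φ m)) i - z (φ m) i - l (φ m)) + (z (φ m) i - zs i)) (l (φ m) - ls)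
      have t2 := abs_add_le (GPF.Fm f zs i - GPF.Fm f (z (φ m)) i +
          (GPF.Fm f (z (φ m)) i - z (φ m) i - l (φ m))) (z (φ m) i - zs i)
      have t3 := abs_add_le (GPF.Fm f zs i - GPF.Fm f (z (φ m)) i)
          (GPF.Fm f (z (φ m)) i - z (φ m) i - l (φ m))
      linarith
    by_contra hne
    have h0 : 0 < |GPF.Fm f zs i - zs i - ls| := by
      rw [abs_pos]
      intro h
      apply hne
      linarith [sub_eq_zero.1 (by linarith : GPF.Fm f zs i - (zs i + ls) = 0)]
    have := habs (|GPF.Fm f zs i - zs i - ls|/2) (by linarith)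
    linarith
  -- unfold back to f
  refine ⟨fun i => Real.exp (zs i), fun i => Real.exp_pos _, Real.exp ls, Real.exp_pos _, ?_⟩
  funext i
  have h1 : f (fun j => Real.exp (zs j)) i = Real.exp (GPF.Fm f zs i) :=
    (GPF.exp_Fm hmaps zs i).symm
  show f (fun j => Real.exp (zs j)) i = (Real.exp ls • fun j => Real.exp (zs j)) i
  rw [h1, hkey i, Pi.smul_apply, smul_eq_mul, Real.exp_add]
  ring
end

section
/- Let n be a positive integer and let f : (ℝ_{>0})^n → (ℝ_{>0})^n be a homogeneous, monotone function. Then f has an eigenvector in (ℝ_{>0})^n if and only if some orbit {f^k(x) : k ∈ ℕ} of f is bounded in the Hilbert projective metric; moreover, in that case every orbit of f is bounded in the Hilbert projective metric. -/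
/-!
In logarithmic coordinates `F w = log ∘ f (exp ∘ w)` is monotone and commutes with adding
constants, hence nonexpansive for the sup norm, and it descends to a nonexpansive map `g` of
`ℝⁿ ⧸ ℝ ∙ 1`, whose quotient norm is half the Hilbert metric. Eigenvectors of `f` are the fixed
points of `g`, and `d_H`-bounded orbits of `f` are bounded orbits of `g`.

For a nonexpansive map `g` of a finite-dimensional normed space, a fixed point bounds every orbit.
Conversely, if the orbit of `x` stays within `M` of `x`, the fixed point `w` of the contraction
`(1 - ε) • g + ε • x` stays within `2M` of `x` and satisfies `‖w - g w‖ ≤ 3Mε`; compactness of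
the ball then gives a fixed point of `g`.
-/

/-- Hilbert's projective metric on the positive cone:
`d_H(y,z) = max_i log(y_i/z_i) - min_i log(y_i/z_i)`. -/
noncomputable def dH {n : ℕ} (y z : Fin n → ℝ) : ℝ :=
  (⨆ i, Real.log (y i / z i)) - (⨅ i, Real.log (y i / z i))

open Set Filter Topology Bornology Function Metric
open Submodule.Quotient (mk mk_surjective)

namespace LipschitzWith

variable {X : Type*} [PseudoMetricSpace X] {g : X → X}

theorem isBounded_orbit_of_isFixedPt (hg : LipschitzWith 1 g) {w : X} (hw : IsFixedPt g w)
    (x : X) : IsBounded (range fun k => g^[k] x) := by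
  refine (isBounded_closedBall (x := w) (r := dist x w)).subset ?_
  rintro _ ⟨k, rfl⟩
  simpa [(hw.iterate k).eq] using (hg.iterate k).dist_le_mul x w

variable {E : Type*} [NormedAddCommGroup E] [NormedSpace ℝ E] {g : E → E}

theorem norm_sub_le_of_eq_smul_add_smul (hg : LipschitzWith 1 g) {x w : E} {M ε : ℝ}
    (hM : ∀ k, ‖g^[k] x - x‖ ≤ M) (hε : 0 < ε) (hε1 : ε ≤ 1)
    (hw : w = (1 - ε) • g w + ε • x) : ‖w - x‖ ≤ 2 * M := by
  set a : ℕ → ℝ := fun k => ‖w - g^[k] x‖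
  have hstep : ∀ k, a (k + 1) ≤ (1 - ε) * a k + ε * M := fun k => calc
    a (k + 1) = ‖(1 - ε) • (g w - g (g^[k] x)) + ε • (x - g^[k + 1] x)‖ := by
        simp only [a, iterate_succ_apply']
        conv_lhs => rw [hw]
        congr 1; module
    _ ≤ (1 - ε) * ‖g w - g (g^[k] x)‖ + ε * ‖x - g^[k + 1] x‖ := by
        refine (norm_add_le _ _).trans ?_
        rw [norm_smul, norm_smul, Real.norm_of_nonneg (by linarith), Real.norm_of_nonneg hε.le]
    _ ≤ (1 - ε) * a k + ε * M := by
        have hlip : ‖g w - g (g^[k] x)‖ ≤ a k := by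
          simpa [dist_eq_norm] using hg.dist_le_mul w (g^[k] x)
        have horbit : ‖x - g^[k + 1] x‖ ≤ M := norm_sub_rev x _ ▸ hM _
        gcongr
  have hdecay : ∀ k, a k ≤ M + (1 - ε) ^ k * (a 0 - M) := by
    intro k
    induction k with
    | zero => simp
    | succ k ih => calc
        a (k + 1) ≤ (1 - ε) * a k + ε * M := hstep k
        _ ≤ (1 - ε) * (M + (1 - ε) ^ k * (a 0 - M)) + ε * M := by gcongr
        _ = M + (1 - ε) ^ (k + 1) * (a 0 - M) := by ring
  have hlim : Tendsto (fun k => 2 * M + (1 - ε) ^ k * (a 0 - M)) atTop (𝓝 (2 * M)) := by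
    simpa using ((tendsto_pow_atTop_nhds_zero_of_lt_one (by linarith) (by linarith)).mul_const
      (a 0 - M)).const_add (2 * M)
  refine ge_of_tendsto' hlim fun k => ?_
  have : ‖w - x‖ ≤ a k + M := (norm_sub_le_norm_sub_add_norm_sub w (g^[k] x) x).trans (by
    simpa [a] using hM k)
  have h0 : a 0 = ‖w - x‖ := rfl
  linarith [hdecay k]

theorem exists_mem_closedBall_dist_apply_le [CompleteSpace E] (hg : LipschitzWith 1 g) {x : E}
    {M : ℝ} (hM : ∀ k, ‖g^[k] x - x‖ ≤ M) {ε : ℝ} (hε : 0 < ε) (hε1 : ε < 1) :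
    ∃ w ∈ closedBall x (2 * M), dist w (g w) ≤ ε * (3 * M) := by
  set T : E → E := fun y => (1 - ε) • g y + ε • x
  set K : NNReal := ⟨1 - ε, by linarith⟩
  have hT : ContractingWith K T := by
    refine ⟨by rw [← NNReal.coe_lt_coe]; exact sub_lt_self 1 hε, .of_dist_le_mul fun y z => ?_⟩
    calc dist (T y) (T z) = (1 - ε) * dist (g y) (g z) := by
          simp only [T, dist_eq_norm, add_sub_add_right_eq_sub, ← smul_sub, norm_smul,
            Real.norm_of_nonneg (by linarith : 0 ≤ 1 - ε)]
      _ ≤ K * dist y z :=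
          mul_le_mul_of_nonneg_left (by simpa using hg.dist_le_mul y z) (sub_nonneg.2 hε1.le)
  set w := hT.fixedPoint T
  have hw : w = (1 - ε) • g w + ε • x := (hT.fixedPoint_isFixedPt (f := T)).symm
  have hwx : ‖w - x‖ ≤ 2 * M := hg.norm_sub_le_of_eq_smul_add_smul hM hε hε1.le hw
  refine ⟨w, mem_closedBall_iff_norm.2 hwx, ?_⟩
  have hgx : ‖x - g x‖ ≤ M := by simpa [norm_sub_rev] using hM 1
  have hgw : ‖g x - g w‖ ≤ ‖w - x‖ := by
    simpa [dist_eq_norm, norm_sub_rev] using hg.dist_le_mul x w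
  calc dist w (g w) = ‖ε • (x - g w)‖ := by
        rw [dist_eq_norm]; nth_rewrite 1 [hw]; congr 1; module
    _ = ε * ‖x - g w‖ := by rw [norm_smul, Real.norm_of_nonneg hε.le]
    _ ≤ ε * (‖x - g x‖ + ‖g x - g w‖) := by gcongr; exact norm_sub_le_norm_sub_add_norm_sub ..
    _ ≤ ε * (3 * M) := by gcongr; linarith

theorem exists_isFixedPt_of_isBounded_orbit [FiniteDimensional ℝ E] (hg : LipschitzWith 1 g)
    {x : E} (hx : IsBounded (range fun k => g^[k] x)) : ∃ w, IsFixedPt g w := by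
  obtain ⟨M, hM⟩ := (isBounded_iff_subset_closedBall x).1 hx
  replace hM : ∀ k, ‖g^[k] x - x‖ ≤ M := fun k => mem_closedBall_iff_norm.1 (hM ⟨k, rfl⟩)
  have happrox (ε : ℝ) (hε : 0 < ε) (hε1 : ε < 1) :=
    hg.exists_mem_closedBall_dist_apply_le hM hε hε1
  obtain ⟨y, hy, -⟩ := happrox _ one_half_pos one_half_lt_one
  obtain ⟨w, -, hmin⟩ := (isCompact_closedBall x (2 * M)).exists_isMinOn ⟨y, hy⟩
    (continuous_id.dist hg.continuous).continuousOn
  refine ⟨w, (dist_le_zero.1 <|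
    ge_of_tendsto (f := fun ε => ε * (3 * M)) (x := 𝓝[>] 0) ?_ ?_).symm⟩
  · exact ((continuous_mul_const (3 * M)).tendsto' 0 0 (zero_mul _)).mono_left nhdsWithin_le_nhds
  · filter_upwards [Ioo_mem_nhdsGT one_pos] with ε ⟨hε, hε1⟩
    obtain ⟨z, hz, hzg⟩ := happrox ε hε hε1
    exact (hmin hz).trans hzg

end LipschitzWith

abbrev PiModConst (ι : Type*) := (ι → ℝ) ⧸ (ℝ ∙ (1 : ι → ℝ))

variable {ι : Type*}

namespace PiModConst

theorem mk_add_smul_one (w : ι → ℝ) (c : ℝ) : (mk (w + c • 1) : PiModConst ι) = mk w := by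
  rw [Submodule.Quotient.eq, add_sub_cancel_left]
  exact Submodule.mem_span_singleton.2 ⟨c, rfl⟩

def map (F : (ι → ℝ) → (ι → ℝ)) (hF : ∀ w (c : ℝ), F (w + c • 1) = F w + c • 1) :
    PiModConst ι → PiModConst ι :=
  Quotient.lift (fun w => (mk (F w) : PiModConst ι)) fun u v huv => by
    obtain ⟨c, hc⟩ := Submodule.mem_span_singleton.1 ((Submodule.quotientRel_def _).1 huv)
    rw [eq_add_of_sub_eq' hc.symm, hF, mk_add_smul_one]

variable {F : (ι → ℝ) → (ι → ℝ)} (hF : ∀ w (c : ℝ), F (w + c • 1) = F w + c • 1)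

theorem map_mk (w : ι → ℝ) : map F hF (mk w) = mk (F w) :=
  rfl

theorem semiconj_mk_map : Semiconj (mk : (ι → ℝ) → PiModConst ι) F (map F hF) :=
  map_mk hF

theorem isFixedPt_map_mk_iff (w : ι → ℝ) :
    IsFixedPt (map F hF) (mk w) ↔ ∃ c : ℝ, F w = w + c • 1 := by
  rw [IsFixedPt, map_mk, Submodule.Quotient.eq, Submodule.mem_span_singleton]
  exact exists_congr fun c => by rw [eq_comm, sub_eq_iff_eq_add']

variable [Fintype ι]

instance : IsClosed ((ℝ ∙ (1 : ι → ℝ) : Submodule ℝ (ι → ℝ)) : Set (ι → ℝ)) :=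
  Submodule.closed_of_finiteDimensional _

theorem norm_mk_eq_infDist (w : ι → ℝ) :
    ‖(mk w : PiModConst ι)‖ = infDist w (ℝ ∙ (1 : ι → ℝ)) :=
  QuotientAddGroup.norm_mk (S := (ℝ ∙ (1 : ι → ℝ)).toAddSubgroup) w

theorem norm_mk (w : ι → ℝ) : ‖(mk w : PiModConst ι)‖ = ((⨆ i, w i) - ⨅ i, w i) / 2 := by
  rcases isEmpty_or_nonempty ι with hι | hι
  · simp [Subsingleton.elim w 0]
  have hsup (i : ι) : w i ≤ ⨆ i, w i := le_ciSup (Finite.bddAbove_range w) i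
  have hinf (i : ι) : ⨅ i, w i ≤ w i := ciInf_le (Finite.bddBelow_range w) i
  rw [norm_mk_eq_infDist]
  apply le_antisymm
  · refine (infDist_le_dist_of_mem (Submodule.mem_span_singleton.2
      ⟨((⨆ i, w i) + ⨅ i, w i) / 2, rfl⟩)).trans ?_
    have hwidth := (hinf hι.some).trans (hsup hι.some)
    refine (dist_pi_le_iff (by linarith)).2 fun i => ?_
    rw [Real.dist_eq, abs_le, Pi.smul_apply, Pi.one_apply, smul_eq_mul, mul_one]
    constructor <;> linarith [hsup i, hinf i]
  · refine (le_infDist ⟨0, Submodule.zero_mem _⟩).2 fun _ hs => ?_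
    obtain ⟨c, rfl⟩ := Submodule.mem_span_singleton.1 hs
    have hcoord (i : ι) : |w i - c| ≤ dist w (c • 1) := by
      simpa [Real.dist_eq] using dist_le_pi_dist w (c • 1) i
    have hup : (⨆ i, w i) ≤ c + dist w (c • 1) :=
      ciSup_le fun i => by linarith [le_abs_self (w i - c), hcoord i]
    have hlow : c - dist w (c • 1) ≤ ⨅ i, w i :=
      le_ciInf fun i => by linarith [neg_abs_le (w i - c), hcoord i]
    linarith

theorem lipschitzWith_map (hF' : LipschitzWith 1 F) : LipschitzWith 1 (map F hF) := by
  refine .of_dist_le_mul fun p q => ?_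
  obtain ⟨u, rfl⟩ := mk_surjective _ p
  obtain ⟨v, rfl⟩ := mk_surjective _ q
  rw [NNReal.coe_one, one_mul, dist_eq_norm, dist_eq_norm, map_mk, map_mk,
    ← Submodule.Quotient.mk_sub, ← Submodule.Quotient.mk_sub, norm_mk_eq_infDist (u - v)]
  refine (le_infDist ⟨0, Submodule.zero_mem _⟩).2 fun _ hs => ?_
  obtain ⟨c, rfl⟩ := Submodule.mem_span_singleton.1 hs
  calc ‖(mk (F u - F v) : PiModConst ι)‖
      = ‖(mk (F u - F (v + c • 1)) : PiModConst ι)‖ := by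
        rw [hF, show F u - (F v + c • 1) = F u - F v + (-c) • 1 by module, mk_add_smul_one]
    _ ≤ dist (F u) (F (v + c • 1)) :=
        (Submodule.Quotient.norm_mk_le _ _).trans_eq (dist_eq_norm ..).symm
    _ ≤ dist u (v + c • 1) := by simpa using hF'.dist_le_mul u (v + c • 1)
    _ = dist (u - v) (c • 1) := by rw [dist_eq_norm, dist_eq_norm, sub_sub]

end PiModConst

/-- Topical maps in the sense of Gunawardena and Keane. -/
structure IsTopical (F : (ι → ℝ) → (ι → ℝ)) : Prop where
  monotone : Monotone F
  map_add_smul_one : ∀ w (c : ℝ), F (w + c • 1) = F w + c • 1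

theorem IsTopical.lipschitzWith [Fintype ι] {F : (ι → ℝ) → (ι → ℝ)} (hF : IsTopical F) :
    LipschitzWith 1 F := by
  have hle (u v : ι → ℝ) : F u ≤ F v + dist u v • 1 := by
    rw [← hF.map_add_smul_one]
    refine hF.monotone fun i => ?_
    have := dist_le_pi_dist u v i
    rw [Real.dist_eq] at this
    simp only [Pi.add_apply, Pi.smul_apply, Pi.one_apply, smul_eq_mul, mul_one]
    linarith [le_abs_self (u i - v i)]
  refine .of_dist_le_mul fun u v => ?_
  rw [NNReal.coe_one, one_mul, dist_pi_le_iff dist_nonneg]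
  intro i
  have h1 := hle u v i
  have h2 := hle v u i
  simp only [Pi.add_apply, Pi.smul_apply, Pi.one_apply, smul_eq_mul, mul_one, dist_comm v u]
    at h1 h2
  rw [Real.dist_eq, abs_le]
  constructor <;> linarith

section LogCoordinates

variable (f : (ι → ℝ) → (ι → ℝ))

noncomputable def logConj (w : ι → ℝ) : ι → ℝ := Real.log ∘ f (Real.exp ∘ w)

variable {f} (hpos : ∀ x : ι → ℝ, (∀ i, 0 < x i) → ∀ i, 0 < f x i)
include hpos

theorem exp_comp_logConj (w : ι → ℝ) : Real.exp ∘ logConj f w = f (Real.exp ∘ w) :=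
  funext fun i => Real.exp_log (hpos _ (fun j => Real.exp_pos (w j)) i)

theorem iterate_exp_comp (k : ℕ) (w : ι → ℝ) :
    f^[k] (Real.exp ∘ w) = Real.exp ∘ (logConj f)^[k] w :=
  (Semiconj.iterate_right (f := (Real.exp ∘ ·)) (exp_comp_logConj hpos) k w).symm

theorem logConj_eq_add_smul_one_iff (w : ι → ℝ) (c : ℝ) :
    logConj f w = w + c • 1 ↔ f (Real.exp ∘ w) = Real.exp c • (Real.exp ∘ w) := by
  rw [← exp_comp_logConj hpos]
  constructor
  · intro h
    ext i
    simp [h, Real.exp_add, mul_comm]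
  · intro h
    ext i
    have := congrArg Real.log (congrFun h i)
    simpa [Real.log_mul, (Real.exp_pos _).ne', add_comm] using this

theorem isTopical_logConj
    (hhom : ∀ c : ℝ, 0 < c → ∀ x : ι → ℝ, (∀ i, 0 < x i) → f (c • x) = c • f x)
    (hmono : ∀ x y : ι → ℝ, (∀ i, 0 < x i) → (∀ i, 0 < y i) → x ≤ y → f x ≤ f y) :
    IsTopical (logConj f) where
  monotone u v huv i :=
    Real.log_le_log (hpos _ (fun j => Real.exp_pos _) i) (hmono _ _ (fun j => Real.exp_pos _)
      (fun j => Real.exp_pos _) (fun j => Real.exp_le_exp.2 (huv j)) i)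
  map_add_smul_one w c := by
    have hexp : Real.exp ∘ (w + c • 1) = Real.exp c • (Real.exp ∘ w) := by
      ext i; simp [Real.exp_add, mul_comm]
    have hw : ∀ j, 0 < (Real.exp ∘ w) j := fun j => Real.exp_pos _
    ext i
    simp only [logConj, hexp, hhom _ (Real.exp_pos c) _ hw, comp_apply, Pi.smul_apply,
      smul_eq_mul, Pi.add_apply, Pi.one_apply, mul_one]
    rw [Real.log_mul (Real.exp_pos c).ne' (hpos _ hw i).ne', Real.log_exp, add_comm]

end LogCoordinates

section HilbertMetric

variable {n : ℕ}

theorem dH_exp_comp (u v : Fin n → ℝ) :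
    dH (Real.exp ∘ u) (Real.exp ∘ v) =
      2 * dist (mk u : PiModConst (Fin n)) (mk v) := by
  rw [dist_eq_norm, ← Submodule.Quotient.mk_sub, PiModConst.norm_mk]
  simp only [dH, comp_apply, ← Real.exp_sub, Real.log_exp, Pi.sub_apply]
  ring

variable {f : (Fin n → ℝ) → (Fin n → ℝ)} (hpos : ∀ x : Fin n → ℝ, (∀ i, 0 < x i) → ∀ i, 0 < f x i)
include hpos

theorem exists_dH_iterate_le_iff_isBounded
    (hF : ∀ w (c : ℝ), logConj f (w + c • 1) = logConj f w + c • 1) {x : Fin n → ℝ}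
    (hx : ∀ i, 0 < x i) :
    (∃ M, ∀ k l : ℕ, dH (f^[k] x) (f^[l] x) ≤ M) ↔
      IsBounded (range fun k => (PiModConst.map (logConj f) hF)^[k] (mk (Real.log ∘ x))) := by
  have hdH (k l : ℕ) : dH (f^[k] x) (f^[l] x) =
      2 * dist ((PiModConst.map (logConj f) hF)^[k] (mk (Real.log ∘ x)))
        ((PiModConst.map (logConj f) hF)^[l] (mk (Real.log ∘ x))) := by
    have hexp : Real.exp ∘ (Real.log ∘ x) = x := funext fun i => Real.exp_log (hx i)
    rw [← hexp, iterate_exp_comp hpos, iterate_exp_comp hpos, dH_exp_comp, hexp,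
      ← (PiModConst.semiconj_mk_map hF).iterate_right k,
      ← (PiModConst.semiconj_mk_map hF).iterate_right l]
  simp only [hdH, isBounded_range_iff]
  exact ⟨fun ⟨M, hM⟩ => ⟨M / 2, fun k l => by linarith [hM k l]⟩,
    fun ⟨C, hC⟩ => ⟨2 * C, fun k l => by linarith [hC k l]⟩⟩

theorem exists_eigenvector_iff_exists_isFixedPt
    (hF : ∀ w (c : ℝ), logConj f (w + c • 1) = logConj f w + c • 1) :
    (∃ x : Fin n → ℝ, (∀ i, 0 < x i) ∧ ∃ lam : ℝ, 0 < lam ∧ f x = lam • x) ↔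
      ∃ q, IsFixedPt (PiModConst.map (logConj f) hF) q := by
  constructor
  · rintro ⟨x, hx, lam, hlam, hfx⟩
    have hexp : Real.exp ∘ (Real.log ∘ x) = x := funext fun i => Real.exp_log (hx i)
    refine ⟨_, (PiModConst.isFixedPt_map_mk_iff hF (Real.log ∘ x)).2 ⟨Real.log lam, ?_⟩⟩
    rwa [logConj_eq_add_smul_one_iff hpos, hexp, Real.exp_log hlam]
  · rintro ⟨q, hq⟩
    obtain ⟨w, rfl⟩ := mk_surjective _ q
    obtain ⟨c, hc⟩ := (PiModConst.isFixedPt_map_mk_iff hF w).1 hq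
    exact ⟨_, fun i => Real.exp_pos (w i), _, Real.exp_pos c,
      (logConj_eq_add_smul_one_iff hpos w c).1 hc⟩

end HilbertMetric

theorem eigenvector_iff_bounded_orbit_general
    (n : ℕ) (f : (Fin n → ℝ) → (Fin n → ℝ))
    (hmaps : ∀ x : Fin n → ℝ, (∀ i, 0 < x i) → ∀ i, 0 < f x i)
    (hhom : ∀ c : ℝ, 0 < c → ∀ x : Fin n → ℝ, (∀ i, 0 < x i) → f (c • x) = c • f x)
    (hmono : ∀ x y : Fin n → ℝ, (∀ i, 0 < x i) → (∀ i, 0 < y i) → x ≤ y → f x ≤ f y) :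
    ((∃ x : Fin n → ℝ, (∀ i, 0 < x i) ∧ ∃ lam : ℝ, 0 < lam ∧ f x = lam • x) ↔
      (∃ x : Fin n → ℝ, (∀ i, 0 < x i) ∧
        ∃ M : ℝ, ∀ k l : ℕ, dH (f^[k] x) (f^[l] x) ≤ M)) ∧
    ((∃ x : Fin n → ℝ, (∀ i, 0 < x i) ∧ ∃ lam : ℝ, 0 < lam ∧ f x = lam • x) →
      ∀ x : Fin n → ℝ, (∀ i, 0 < x i) →
        ∃ M : ℝ, ∀ k l : ℕ, dH (f^[k] x) (f^[l] x) ≤ M) := by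
  have hF := isTopical_logConj hmaps hhom hmono
  have hg := PiModConst.lipschitzWith_map hF.map_add_smul_one hF.lipschitzWith
  have heig := exists_eigenvector_iff_exists_isFixedPt hmaps hF.map_add_smul_one
  have horbit {x : Fin n → ℝ} (hx : ∀ i, 0 < x i) :=
    exists_dH_iterate_le_iff_isBounded hmaps hF.map_add_smul_one hx
  refine ⟨⟨fun h => ?_, fun ⟨x, hx, hb⟩ => heig.2 ?_⟩, fun h x hx => ?_⟩
  · obtain ⟨q, hq⟩ := heig.1 h
    exact ⟨1, fun _ => one_pos, (horbit fun _ => one_pos).2 (hg.isBounded_orbit_of_isFixedPt hq _)⟩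
  · exact hg.exists_isFixedPt_of_isBounded_orbit ((horbit hx).1 hb)
  · obtain ⟨q, hq⟩ := heig.1 h
    exact (horbit hx).2 (hg.isBounded_orbit_of_isFixedPt hq _)

theorem eigenvector_iff_bounded_orbit
    (n : ℕ) (hn : 0 < n) (f : (Fin n → ℝ) → (Fin n → ℝ))
    (hmaps : ∀ x : Fin n → ℝ, (∀ i, 0 < x i) → ∀ i, 0 < f x i)
    (hhom : ∀ c : ℝ, 0 < c → ∀ x : Fin n → ℝ, (∀ i, 0 < x i) → f (c • x) = c • f x)
    (hmono : ∀ x y : Fin n → ℝ, (∀ i, 0 < x i) → (∀ i, 0 < y i) → x ≤ y → f x ≤ f y) :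
    ((∃ x : Fin n → ℝ, (∀ i, 0 < x i) ∧ ∃ lam : ℝ, 0 < lam ∧ f x = lam • x) ↔
      (∃ x : Fin n → ℝ, (∀ i, 0 < x i) ∧
        ∃ M : ℝ, ∀ k l : ℕ, dH (f^[k] x) (f^[l] x) ≤ M)) ∧
    ((∃ x : Fin n → ℝ, (∀ i, 0 < x i) ∧ ∃ lam : ℝ, 0 < lam ∧ f x = lam • x) →
      ∀ x : Fin n → ℝ, (∀ i, 0 < x i) →
        ∃ M : ℝ, ∀ k l : ℕ, dH (f^[k] x) (f^[l] x) ≤ M) :=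
  eigenvector_iff_bounded_orbit_general n f hmaps hhom hmono
end

section
/- Let n be a positive integer and let f : (ℝ_{>0})^n → (ℝ_{>0})^n be a homogeneous, monotone function such that the associated directed graph G(f) is strongly connected. Then for every λ > 0 the super-eigenspace S^λ(f) is bounded in the Hilbert projective metric (i.e. has finite d_H-diameter). -/
theorem super_eigenspaces_bounded_of_strongly_connected
    (n : ℕ) (hn : 0 < n) (f : (Fin n → ℝ) → (Fin n → ℝ))
    (hmaps : ∀ x : Fin n → ℝ, (∀ i, 0 < x i) → ∀ i, 0 < f x i)
    (hhom : ∀ c : ℝ, 0 < c → ∀ x : Fin n → ℝ, (∀ i, 0 < x i) → f (c • x) = c • f x)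
    (hmono : ∀ x y : Fin n → ℝ, (∀ i, 0 < x i) → (∀ i, 0 < y i) → x ≤ y → f x ≤ f y)
    (hconn : ∀ i j : Fin n, Relation.ReflTransGen (GraphEdge f) i j) :
    ∀ lam : ℝ, 0 < lam → ∃ M : ℝ,
      ∀ x y : Fin n → ℝ,
        (∀ i, 0 < x i) → f x ≤ lam • x →
        (∀ i, 0 < y i) → f y ≤ lam • y →
        dH x y ≤ M := by
  intro lam hlam
  haveI : Nonempty (Fin n) := ⟨⟨0, hn⟩⟩
  -- single edge step
  have step : ∀ i j : Fin n, GraphEdge f i j → ∀ B : ℝ, 1 ≤ B →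
      ∃ u : ℝ, 1 ≤ u ∧ ∀ x : Fin n → ℝ, (∀ k, 0 < x k) → f x ≤ lam • x →
        (∀ k, 1 ≤ x k) → x i ≤ B → x j ≤ u := by
    intro i j hij B hB
    obtain ⟨u0, hu0pos, hu0⟩ := hij (lam * B + 1)
    refine ⟨max u0 1, le_max_right _ _, ?_⟩
    intro x hxpos hxe hx1 hxiB
    by_contra hcon
    push_neg at hcon
    have hle : uVec j u0 ≤ x := by
      refine Pi.le_def.mpr fun k => ?_
      by_cases hk : k = j
      · subst hk
        simp only [uVec, if_pos rfl]
        exact le_trans (le_max_left u0 1) hcon.le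
      · simp only [uVec, if_neg hk]
        exact hx1 k
    have hposu : ∀ k, 0 < uVec j u0 k := by
      intro k; by_cases hk : k = j <;> simp [uVec, hk, hu0pos]
    have hmle := Pi.le_def.mp (hmono _ _ hposu hxpos hle) i
    have h2 : lam * B + 1 ≤ f x i := le_trans hu0 hmle
    have h3 : f x i ≤ lam * x i := by
      have := Pi.le_def.mp hxe i
      simpa using this
    have h4 : lam * x i ≤ lam * B := mul_le_mul_of_nonneg_left hxiB hlam.le
    linarith
  -- propagate along paths
  have path : ∀ i j : Fin n, Relation.ReflTransGen (GraphEdge f) i j →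
      ∀ B : ℝ, 1 ≤ B → ∃ C : ℝ, 1 ≤ C ∧ ∀ x : Fin n → ℝ, (∀ k, 0 < x k) →
        f x ≤ lam • x → (∀ k, 1 ≤ x k) → x i ≤ B → x j ≤ C := by
    intro i j hij
    induction hij using Relation.ReflTransGen.head_induction_on with
    | refl => exact fun B hB => ⟨B, hB, fun x _ _ _ h => h⟩
    | head h _ ih =>
      intro B hB
      obtain ⟨u, hu1, hu⟩ := step _ _ h B hB
      obtain ⟨Cv, hC1, hC⟩ := ih u hu1
      exact ⟨Cv, hC1, fun x hp he h1 hiB => hC x hp he h1 (hu x hp he h1 hiB)⟩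
  have key : ∀ i j : Fin n, ∃ C : ℝ, 1 ≤ C ∧ ∀ x : Fin n → ℝ, (∀ k, 0 < x k) →
      f x ≤ lam • x → (∀ k, 1 ≤ x k) → x i ≤ 1 → x j ≤ C :=
    fun i j => path i j (hconn i j) 1 le_rfl
  choose C hC1 hC using key
  set M0 : ℝ := ∑ i : Fin n, ∑ j : Fin n, C i j with hM0
  have hCM : ∀ i j : Fin n, C i j ≤ M0 := by
    intro i j
    have h1 : C i j ≤ ∑ j' : Fin n, C i j' :=
      Finset.single_le_sum (fun k _ => le_trans zero_le_one (hC1 i k)) (Finset.mem_univ j)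
    have h2 : (∑ j' : Fin n, C i j') ≤ M0 :=
      Finset.single_le_sum
        (fun k _ => Finset.sum_nonneg fun k' _ => le_trans zero_le_one (hC1 k k'))
        (Finset.mem_univ i)
    linarith
  obtain ⟨i0⟩ := (inferInstance : Nonempty (Fin n))
  have hM01 : 1 ≤ M0 := le_trans (hC1 i0 i0) (hCM i0 i0)
  have hM00 : 0 < M0 := lt_of_lt_of_le one_pos hM01
  -- ratio bound
  have ratio : ∀ x : Fin n → ℝ, (∀ k, 0 < x k) → f x ≤ lam • x →
      ∀ j k, x j ≤ M0 * x k := by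
    intro x hxpos hxe j k
    obtain ⟨b, hb⟩ := Finite.exists_min x
    have hm : 0 < x b := hxpos b
    set x' : Fin n → ℝ := (x b)⁻¹ • x with hx'
    have hx'pos : ∀ k, 0 < x' k := fun k => by
      simp only [hx', Pi.smul_apply, smul_eq_mul]
      exact mul_pos (inv_pos.mpr hm) (hxpos k)
    have hx'e : f x' ≤ lam • x' := by
      rw [hx', hhom _ (inv_pos.mpr hm) x hxpos]
      refine Pi.le_def.mpr fun i => ?_
      simp only [Pi.smul_apply, smul_eq_mul]
      have := Pi.le_def.mp hxe i
      simp only [Pi.smul_apply, smul_eq_mul] at this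
      calc (x b)⁻¹ * f x i ≤ (x b)⁻¹ * (lam * x i) :=
            mul_le_mul_of_nonneg_left this (inv_nonneg.mpr hm.le)
        _ = lam * ((x b)⁻¹ * x i) := by ring
    have hx'1 : ∀ k, 1 ≤ x' k := by
      intro k
      simp only [hx', Pi.smul_apply, smul_eq_mul]
      rw [← inv_mul_cancel₀ hm.ne']
      exact mul_le_mul_of_nonneg_left (hb k) (inv_nonneg.mpr hm.le)
    have hx'b : x' b ≤ 1 := by
      simp only [hx', Pi.smul_apply, smul_eq_mul]
      rw [inv_mul_cancel₀ hm.ne']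
    have hx'j : x' j ≤ C b j := hC b j x' hx'pos hx'e hx'1 hx'b
    have hxj : x j ≤ M0 * x b := by
      have h1 : (x b)⁻¹ * x j ≤ M0 := le_trans hx'j (hCM b j)
      have h2 : x b * ((x b)⁻¹ * x j) ≤ x b * M0 :=
        mul_le_mul_of_nonneg_left h1 hm.le
      rw [← mul_assoc, mul_inv_cancel₀ hm.ne', one_mul] at h2
      linarith
    calc x j ≤ M0 * x b := hxj
      _ ≤ M0 * x k := mul_le_mul_of_nonneg_left (hb k) hM00.le
  have hlog : ∀ z : Fin n → ℝ, (∀ k, 0 < z k) → f z ≤ lam • z →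
      ∀ j k, Real.log (z j) ≤ Real.log M0 + Real.log (z k) := by
    intro z hz hze j k
    rw [← Real.log_mul hM00.ne' (hz k).ne']
    exact Real.log_le_log (hz j) (ratio z hz hze j k)
  refine ⟨2 * Real.log M0, ?_⟩
  intro x y hx hfx hy hfy
  have hterm : ∀ i i' : Fin n,
      Real.log (x i / y i) - Real.log (x i' / y i') ≤ 2 * Real.log M0 := by
    intro i i'
    rw [Real.log_div (hx i).ne' (hy i).ne', Real.log_div (hx i').ne' (hy i').ne']
    have h1 := hlog x hx hfx i i'
    have h2 := hlog y hy hfy i' i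
    linarith
  rw [dH, sub_le_iff_le_add]
  refine ciSup_le fun i => ?_
  have hinf : Real.log (x i / y i) - 2 * Real.log M0 ≤ ⨅ i', Real.log (x i' / y i') :=
    le_ciInf fun i' => by linarith [hterm i i']
  linarith
end

section
/- Let n be a positive integer and let f : (ℝ_{>0})^n → (ℝ_{>0})^n be a homogeneous, monotone function. All super-eigenspaces S^λ(f), λ > 0, are bounded in the Hilbert projective metric (i.e. have finite d_H-diameter) if and only if f is indecomposable. -/
/-- `f` is decomposable: there is a non-trivial partition `I ∪ J = {1,…,n}`
(here `I = Jᶜ`) such that for every `i ∈ I` the monotone function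
`u ↦ f_i(u_J)` is bounded above, where `(u_J)_k = u` for `k ∈ J` and `1` otherwise. -/
def Decomposable {n : ℕ} (f : (Fin n → ℝ) → (Fin n → ℝ)) : Prop :=
  ∃ J : Finset (Fin n), J.Nonempty ∧ Jᶜ.Nonempty ∧
    ∀ i ∈ Jᶜ, ∃ M : ℝ, ∀ u : ℝ, 0 < u →
      f (fun k => if k ∈ J then u else 1) i ≤ M

/-!
If `f` is decomposable along `J`, the vectors `u_J` with `u ≥ 1` all lie in one super-eigenspace
(on `J` by homogeneity and monotonicity, off `J` by the decomposability bound), while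
`d_H(1, u_J) = log u` is unbounded.

Conversely, normalise `x ∈ S^λ(f)` so that `min x = 1`, and let `A_t = {i | x_i < t}`, which
is nonempty for `t > 1`. Unless `A_t` is everything, indecomposability gives `i ∈ A_t` with
`f_i(t'_J) ≥ λ t` for `J = A_tᶜ` and a threshold `t'` depending only on `t`. Were `x ≥ t'` on
`J`, then `λ x_i ≥ f_i(x) ≥ f_i(t'_J) ≥ λ t`, contradicting `i ∈ A_t`; so `A_{t'}` is strictly
larger than `A_t`. After `n` such steps every coordinate of `x` lies below a bound `R` depending
only on `f` and `λ`, so `x_i ≤ R x_j` for all `i, j` and `d_H ≤ 2 log R` on `S^λ(f)`.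
-/

open Filter Finset Real

variable {ι : Type*}

def positiveCone (ι : Type*) : Set (ι → ℝ) := {x | ∀ i, 0 < x i}

def HomogeneousOn (f : (ι → ℝ) → ι → ℝ) (s : Set (ι → ℝ)) : Prop :=
  ∀ c : ℝ, 0 < c → ∀ x ∈ s, f (c • x) = c • f x

def superEigenspace (f : (ι → ℝ) → ι → ℝ) (lam : ℝ) : Set (ι → ℝ) :=
  {x | x ∈ positiveCone ι ∧ f x ≤ lam • x}

/-- The vector `u_J`. -/
def blockVec [DecidableEq ι] (J : Finset ι) (u : ℝ) : ι → ℝ := fun k => if k ∈ J then u else 1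

def Indecomposable [Fintype ι] [DecidableEq ι] (f : (ι → ℝ) → ι → ℝ) : Prop :=
  ∀ J : Finset ι, J.Nonempty → Jᶜ.Nonempty →
    ∃ i ∈ Jᶜ, Tendsto (fun u => f (blockVec J u) i) atTop atTop

section blockVec

variable [DecidableEq ι] {J : Finset ι}

lemma blockVec_mem_positiveCone {u : ℝ} (hu : 0 < u) : blockVec J u ∈ positiveCone ι := by
  intro k
  unfold blockVec
  split_ifs <;> positivity

lemma monotone_blockVec : Monotone (blockVec J) := fun u v huv k => by
  unfold blockVec
  split_ifs <;> simp [huv]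

lemma blockVec_le_smul_one {u : ℝ} (hu : 1 ≤ u) : blockVec J u ≤ u • 1 := fun k => by
  unfold blockVec
  split_ifs <;> simp [hu]

lemma blockVec_le_of_forall_mem_le {x : ι → ℝ} {u : ℝ} (hx : ∀ k, 1 ≤ x k)
    (hJ : ∀ k ∈ J, u ≤ x k) : blockVec J u ≤ x := fun k => by
  unfold blockVec
  split_ifs with hk
  exacts [hJ k hk, hx k]

end blockVec

section superEigenspace

variable {f : (ι → ℝ) → ι → ℝ}

lemma smul_mem_superEigenspace
    (hhom : HomogeneousOn f (positiveCone ι))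
    {lam c : ℝ} (hc : 0 < c) {x : ι → ℝ} (hx : x ∈ superEigenspace f lam) :
    c • x ∈ superEigenspace f lam := by
  refine ⟨fun i => mul_pos hc (hx.1 i), ?_⟩
  rw [hhom c hc x hx.1, smul_comm]
  exact smul_le_smul_of_nonneg_left hx.2 hc.le

lemma le_apply_of_blockVec_le [DecidableEq ι] (hmono : MonotoneOn f (positiveCone ι))
    {lam t u : ℝ} (hlam : 0 < lam) (hu : 0 < u) {x : ι → ℝ} (hx : x ∈ superEigenspace f lam)
    {J : Finset ι} (hJx : blockVec J u ≤ x) {i : ι} (hi : lam * t ≤ f (blockVec J u) i) :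
    t ≤ x i := by
  have hfx : f (blockVec J u) i ≤ lam * x i :=
    (hmono (blockVec_mem_positiveCone hu) hx.1 hJx i).trans (hx.2 i)
  exact le_of_mul_le_mul_left (hi.trans hfx) hlam

variable [Fintype ι] [DecidableEq ι]

lemma exists_blockVec_mem_superEigenspace
    (hhom : HomogeneousOn f (positiveCone ι))
    (hmono : MonotoneOn f (positiveCone ι)) {J : Finset ι}
    (hbdd : ∀ i ∉ J, ∃ M, ∀ u, 0 < u → f (blockVec J u) i ≤ M) :
    ∃ lam > 0, ∀ u, 1 ≤ u → blockVec J u ∈ superEigenspace f lam := by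
  have hev : ∀ i, ∀ᶠ B in atTop,
      f 1 i ≤ B ∧ (i ∉ J → ∀ u, 0 < u → f (blockVec J u) i ≤ B) := by
    intro i
    by_cases hi : i ∈ J
    · exact (eventually_ge_atTop _).mono fun B hB => ⟨hB, fun h => (h hi).elim⟩
    · obtain ⟨M, hM⟩ := hbdd i hi
      exact ((eventually_ge_atTop _).and (eventually_ge_atTop M)).mono
        fun B hB => ⟨hB.1, fun _ u hu => (hM u hu).trans hB.2⟩
  obtain ⟨B, hB, hBpos⟩ := ((eventually_all.2 hev).and (eventually_gt_atTop 0)).exists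
  refine ⟨B, hBpos, fun u hu => ⟨blockVec_mem_positiveCone (by linarith), fun i => ?_⟩⟩
  have hu₀ : 0 < u := by linarith
  by_cases hi : i ∈ J
  · calc f (blockVec J u) i ≤ f (u • 1) i :=
          hmono (blockVec_mem_positiveCone hu₀) (fun _ => by simpa using hu₀)
            (blockVec_le_smul_one hu) i
      _ = u * f 1 i := by rw [hhom u hu₀ 1 fun _ => one_pos]; rfl
      _ ≤ u * B := by gcongr; exact (hB i).1
      _ = (B • blockVec J u) i := by simp [blockVec, hi, mul_comm]
  · calc f (blockVec J u) i ≤ B := (hB i).2 hi u hu₀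
      _ = (B • blockVec J u) i := by simp [blockVec, hi]

lemma Indecomposable.exists_threshold (hind : Indecomposable f) (b t : ℝ) :
    ∃ t' > t, ∀ J : Finset ι, J.Nonempty → Jᶜ.Nonempty → ∃ i ∈ Jᶜ, b ≤ f (blockVec J t') i := by
  have hev : ∀ J : Finset ι, ∀ᶠ u in atTop,
      J.Nonempty → Jᶜ.Nonempty → ∃ i ∈ Jᶜ, b ≤ f (blockVec J u) i := by
    intro J
    by_cases hJ : J.Nonempty ∧ Jᶜ.Nonempty
    · obtain ⟨i, hi, hT⟩ := hind J hJ.1 hJ.2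
      exact (hT.eventually_ge_atTop b).mono fun u hu _ _ => ⟨i, hi, hu⟩
    · exact Eventually.of_forall fun u h h' => (hJ ⟨h, h'⟩).elim
  exact ((eventually_gt_atTop t).and (eventually_all.2 hev)).exists

lemma Indecomposable.exists_min_le_card_filter_lt (hind : Indecomposable f)
    (hmono : MonotoneOn f (positiveCone ι))
    {lam : ℝ} (hlam : 0 < lam) (k : ℕ) :
    ∃ t, 1 < t ∧ ∀ x ∈ superEigenspace f lam, (∀ i, 1 ≤ x i) → (∃ j, x j = 1) →
      min (k + 1) (Fintype.card ι) ≤ #{i | x i < t} := by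
  induction k with
  | zero =>
    refine ⟨2, one_lt_two, fun x _ _ ⟨j, hj⟩ => ?_⟩
    have : 0 < #{i | x i < 2} := card_pos.2 ⟨j, by simp [hj]⟩
    omega
  | succ k ih =>
    obtain ⟨t, ht, hcard⟩ := ih
    obtain ⟨t', htt', hthr⟩ := hind.exists_threshold (lam * t) t
    refine ⟨t', ht.trans htt', fun x hx hx₁ ⟨j₀, hj₀⟩ => ?_⟩
    have hA := hcard x hx hx₁ ⟨j₀, hj₀⟩
    set A : Finset ι := {i | x i < t}
    have hAA' : A ⊆ ({i | x i < t'} : Finset ι) := fun i hi => by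
      simp only [A, mem_filter, mem_univ, true_and] at hi ⊢
      exact hi.trans htt'
    by_cases hAc : Aᶜ.Nonempty
    · have hAne : (Aᶜᶜ).Nonempty := ⟨j₀, by simp [A, hj₀, ht]⟩
      obtain ⟨i, hi, hti⟩ := hthr Aᶜ hAc hAne
      obtain ⟨j, hjA, hjt'⟩ : ∃ j ∈ Aᶜ, x j < t' := by
        by_contra! h
        have := le_apply_of_blockVec_le hmono hlam (by linarith) hx
          (blockVec_le_of_forall_mem_le hx₁ h) hti
        simp only [compl_compl, A, mem_filter, mem_univ, true_and] at hi
        linarith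
      have hlt := card_lt_card ((ssubset_iff_of_subset hAA').2
        ⟨j, by simpa using hjt', by simpa using hjA⟩)
      omega
    · rw [not_nonempty_iff_eq_empty, compl_eq_empty_iff] at hAc
      have := card_le_card hAA'
      rw [hAc, card_univ] at this
      omega

lemma Indecomposable.exists_le_mul_of_mem_superEigenspace (hind : Indecomposable f)
    (hhom : HomogeneousOn f (positiveCone ι)) (hmono : MonotoneOn f (positiveCone ι))
    {lam : ℝ} (hlam : 0 < lam) :
    ∃ R, 1 ≤ R ∧ ∀ x ∈ superEigenspace f lam, ∀ i j, x i ≤ R * x j := by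
  obtain ⟨t, ht, hcard⟩ := hind.exists_min_le_card_filter_lt hmono hlam (Fintype.card ι)
  refine ⟨t, ht.le, fun x hx i j => ?_⟩
  have : Nonempty ι := ⟨i⟩
  obtain ⟨j₀, hj₀⟩ := Finite.exists_min x
  have hx₀ := hx.1 j₀
  set y := (x j₀)⁻¹ • x
  have hy : y ∈ superEigenspace f lam := smul_mem_superEigenspace hhom (inv_pos.2 hx₀) hx
  have hy₁ : ∀ k, 1 ≤ y k := fun k => by
    simpa [y, le_inv_mul_iff₀ hx₀] using hj₀ k
  have hyj₀ : y j₀ = 1 := by simp [y, hx₀.ne']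
  have hall : ({k | y k < t} : Finset ι) = univ := by
    have := hcard y hy hy₁ ⟨j₀, hyj₀⟩
    have := card_le_univ ({k | y k < t} : Finset ι)
    exact eq_univ_of_card _ (by omega)
  have hyi : y i < t := by simpa using (Finset.ext_iff.1 hall i).2 (mem_univ i)
  calc x i = y i * x j₀ := by simp only [y, Pi.smul_apply, smul_eq_mul]; field_simp
    _ ≤ t * x j₀ := by gcongr
    _ ≤ t * x j := by gcongr; exact hj₀ j

end superEigenspace

section HilbertMetric

variable {n : ℕ}

lemma sub_le_dH (x y : Fin n → ℝ) (i j : Fin n) :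
    log (x i / y i) - log (x j / y j) ≤ dH x y :=
  sub_le_sub (le_ciSup (f := fun i => log (x i / y i)) (Finite.bddAbove_range _) i)
    (ciInf_le (Finite.bddBelow_range _) j)

lemma dH_le_of_forall_sub_le {x y : Fin n → ℝ} {C : ℝ} (hC : 0 ≤ C)
    (h : ∀ i j, log (x i / y i) - log (x j / y j) ≤ C) : dH x y ≤ C := by
  rcases isEmpty_or_nonempty (Fin n) with _ | _
  · simpa [dH] using hC
  · rw [dH, sub_le_comm]
    exact le_ciInf fun j => sub_le_iff_le_add.2 (ciSup_le fun i => by linarith [h i j])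

lemma dH_le_two_mul_log {x y : Fin n → ℝ} {R : ℝ} (hR : 1 ≤ R)
    (hx : x ∈ positiveCone (Fin n)) (hy : y ∈ positiveCone (Fin n))
    (hxR : ∀ i j, x i ≤ R * x j) (hyR : ∀ i j, y i ≤ R * y j) : dH x y ≤ 2 * log R := by
  have hlog : ∀ z ∈ positiveCone (Fin n), (∀ i j, z i ≤ R * z j) →
      ∀ i j, log (z i) ≤ log R + log (z j) := fun z hz hzR i j => by
    rw [← log_mul (by positivity) (hz j).ne']
    exact log_le_log (hz i) (hzR i j)
  refine dH_le_of_forall_sub_le (by have := log_nonneg hR; positivity) fun i j => ?_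
  rw [log_div (hx i).ne' (hy i).ne', log_div (hx j).ne' (hy j).ne']
  linarith [hlog x hx hxR i j, hlog y hy hyR j i]

lemma log_le_dH_blockVec {J : Finset (Fin n)} {i j : Fin n} (hi : i ∉ J) (hj : j ∈ J) (u : ℝ) :
    log u ≤ dH (blockVec J 1) (blockVec J u) := by
  simpa [blockVec, hi, hj] using sub_le_dH (blockVec J 1) (blockVec J u) i j

end HilbertMetric

section Decomposable

variable {n : ℕ} {f : (Fin n → ℝ) → Fin n → ℝ}

lemma Decomposable.exists_dH_gt
    (hhom : HomogeneousOn f (positiveCone (Fin n)))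
    (hmono : MonotoneOn f (positiveCone (Fin n))) (hdec : Decomposable f) :
    ∃ lam > 0, ∀ M, ∃ x ∈ superEigenspace f lam, ∃ y ∈ superEigenspace f lam, M < dH x y := by
  obtain ⟨J, ⟨j, hj⟩, ⟨i, hi⟩, hbdd⟩ := hdec
  obtain ⟨lam, hlam, hmem⟩ :=
    exists_blockVec_mem_superEigenspace hhom hmono fun i hi => hbdd i (mem_compl.2 hi)
  refine ⟨lam, hlam, fun M => ⟨_, hmem 1 le_rfl, _, hmem (exp (|M| + 1)) ?_, ?_⟩⟩
  · exact one_le_exp (by positivity)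
  · have := log_le_dH_blockVec (mem_compl.1 hi) hj (exp (|M| + 1))
    rw [log_exp] at this
    linarith [le_abs_self M]

lemma indecomposable_of_not_decomposable (hmono : MonotoneOn f (positiveCone (Fin n)))
    (hind : ¬ Decomposable f) : Indecomposable f := by
  intro J hJ hJc
  simp only [Decomposable, not_exists, not_and, not_forall, not_le] at hind
  obtain ⟨i, hi, hunb⟩ := hind J hJ hJc
  refine ⟨i, hi, tendsto_atTop.2 fun M => ?_⟩
  obtain ⟨u, hu, hMu⟩ := hunb M
  exact eventually_atTop.2 ⟨u, fun v hv => hMu.le.trans <| hmono (blockVec_mem_positiveCone hu)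
    (blockVec_mem_positiveCone (hu.trans_le hv)) (monotone_blockVec hv) i⟩

lemma exists_dH_le_of_not_decomposable
    (hhom : HomogeneousOn f (positiveCone (Fin n)))
    (hmono : MonotoneOn f (positiveCone (Fin n))) (hind : ¬ Decomposable f)
    {lam : ℝ} (hlam : 0 < lam) :
    ∃ M, ∀ x ∈ superEigenspace f lam, ∀ y ∈ superEigenspace f lam, dH x y ≤ M := by
  obtain ⟨R, hR, hxR⟩ := (indecomposable_of_not_decomposable hmono hind)
    |>.exists_le_mul_of_mem_superEigenspace hhom hmono hlam
  exact ⟨2 * log R, fun x hx y hy => dH_le_two_mul_log hR hx.1 hy.1 (hxR x hx) (hxR y hy)⟩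

end Decomposable

theorem super_eigenspaces_bounded_iff_indecomposable_general
    (n : ℕ) (f : (Fin n → ℝ) → (Fin n → ℝ))
    (hhom : ∀ c : ℝ, 0 < c → ∀ x : Fin n → ℝ, (∀ i, 0 < x i) → f (c • x) = c • f x)
    (hmono : ∀ x y : Fin n → ℝ, (∀ i, 0 < x i) → (∀ i, 0 < y i) → x ≤ y → f x ≤ f y) :
    (∀ lam : ℝ, 0 < lam → ∃ M : ℝ,
      ∀ x y : Fin n → ℝ,
        (∀ i, 0 < x i) → f x ≤ lam • x →
        (∀ i, 0 < y i) → f y ≤ lam • y →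
        dH x y ≤ M) ↔ ¬ Decomposable f := by
  have hmono' : MonotoneOn f (positiveCone (Fin n)) := fun x hx y hy => hmono x y hx hy
  constructor
  · intro hbdd hdec
    obtain ⟨lam, hlam, hunb⟩ := hdec.exists_dH_gt hhom hmono'
    obtain ⟨M, hM⟩ := hbdd lam hlam
    obtain ⟨x, hx, y, hy, hMxy⟩ := hunb M
    exact (hM x y hx.1 hx.2 hy.1 hy.2).not_gt hMxy
  · intro hind lam hlam
    obtain ⟨M, hM⟩ := exists_dH_le_of_not_decomposable hhom hmono' hind hlam
    exact ⟨M, fun x y hx hfx hy hfy => hM x ⟨hx, hfx⟩ y ⟨hy, hfy⟩⟩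

theorem super_eigenspaces_bounded_iff_indecomposable
    (n : ℕ) (hn : 0 < n) (f : (Fin n → ℝ) → (Fin n → ℝ))
    (hmaps : ∀ x : Fin n → ℝ, (∀ i, 0 < x i) → ∀ i, 0 < f x i)
    (hhom : ∀ c : ℝ, 0 < c → ∀ x : Fin n → ℝ, (∀ i, 0 < x i) → f (c • x) = c • f x)
    (hmono : ∀ x y : Fin n → ℝ, (∀ i, 0 < x i) → (∀ i, 0 < y i) → x ≤ y → f x ≤ f y) :
    (∀ lam : ℝ, 0 < lam → ∃ M : ℝ,
      ∀ x y : Fin n → ℝ,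
        (∀ i, 0 < x i) → f x ≤ lam • x →
        (∀ i, 0 < y i) → f y ≤ lam • y →
        dH x y ≤ M) ↔ ¬ Decomposable f :=
  super_eigenspaces_bounded_iff_indecomposable_general n f hhom hmono
end

section
/- Let n be a positive integer and let f : ℝ^n → ℝ^n be a topical function. Then the sequence k ↦ ⊤(f^k(0)) is subadditive (⊤(f^{k+l}(0)) ≤ ⊤(f^k(0)) + ⊤(f^l(0)) for all k, l), and there exists a real number c such that for every x ∈ ℝ^n the sequence ⊤(f^k(x))/k converges to c as k → ∞. -/
/-!
A topical map commutes with adding constants and is monotone, so `x ≤ y + c` implies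
`f^[k] x ≤ f^[k] y + c`; hence `⊤(f^[k] x) ≤ ⊤(f^[k] y) + ⊤(x - y)`. Taking `x = f^[l] 0`,
`y = 0` gives subadditivity of `u k = ⊤(f^[k] 0)`, and `f^[k] 0 ≥ k · ⊥(f 0)` bounds `u k / k`
from below, so Fekete's lemma gives the limit `c` of `u k / k`. For any other `x`, the difference
`⊤(f^[k] x) - u k` stays between `-⊤(-x)` and `⊤ x`, so it vanishes after dividing by `k`.
-/

open Filter

/-- `⊤(x) = max_i x_i`. -/
noncomputable def topV {n : ℕ} (x : Fin n → ℝ) : ℝ := ⨆ i, x i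

open Topology

section TopV

variable {n : ℕ}

theorem le_topV (x : Fin n → ℝ) (i : Fin n) : x i ≤ topV x :=
  le_ciSup (Set.finite_range x).bddAbove i

theorem topV_mono : Monotone (topV (n := n)) := fun _ y hxy =>
  ciSup_mono (Set.finite_range y).bddAbove hxy

variable [NeZero n]

theorem topV_add_const (x : Fin n → ℝ) (h : ℝ) : topV (fun i => x i + h) = topV x + h :=
  ((OrderIso.addRight h).map_ciSup (Set.finite_range x).bddAbove).symm

theorem le_topV_of_const_le {x : Fin n → ℝ} {c : ℝ} (hcx : (fun _ => c) ≤ x) : c ≤ topV x :=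
  (hcx 0).trans (le_topV x 0)

end TopV

theorem tendsto_div_natCast_of_bounded_sub {u v : ℕ → ℝ} {c a b : ℝ}
    (hu : Tendsto (fun k => u k / k) atTop (𝓝 c))
    (hlo : ∀ k, u k + a ≤ v k) (hhi : ∀ k, v k ≤ u k + b) :
    Tendsto (fun k => v k / k) atTop (𝓝 c) := by
  have hshift : ∀ d : ℝ, Tendsto (fun k : ℕ => (u k + d) / k) atTop (𝓝 c) := fun d => by
    simpa only [add_div, add_zero] using hu.add (tendsto_const_div_atTop_nhds_zero_nat d)
  exact tendsto_of_tendsto_of_tendsto_of_le_of_le (hshift a) (hshift b)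
    (fun k => div_le_div_of_nonneg_right (hlo k) k.cast_nonneg)
    (fun k => div_le_div_of_nonneg_right (hhi k) k.cast_nonneg)

namespace Topical

section

variable {ι : Type*} {f : (ι → ℝ) → (ι → ℝ)}
  (htop : ∀ (x : ι → ℝ) (h : ℝ), f (fun i => x i + h) = fun i => f x i + h)
include htop

theorem iterate_add_const (k : ℕ) (x : ι → ℝ) (h : ℝ) :
    f^[k] (fun i => x i + h) = fun i => f^[k] x i + h := by
  induction k generalizing x with
  | zero => rfl
  | succ k ih => rw [Function.iterate_succ_apply, htop, ih, Function.iterate_succ_apply]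

variable (hmono : Monotone f)
include hmono

theorem iterate_le_add_const {x y : ι → ℝ} {c : ℝ} (hxy : x ≤ fun i => y i + c) (k : ℕ) :
    f^[k] x ≤ fun i => f^[k] y i + c :=
  (hmono.iterate k hxy).trans_eq (iterate_add_const htop k y c)

theorem add_const_le_iterate {x y : ι → ℝ} {c : ℝ} (hxy : (fun i => y i + c) ≤ x) (k : ℕ) :
    (fun i => f^[k] y i + c) ≤ f^[k] x :=
  (iterate_add_const htop k y c).symm.trans_le (hmono.iterate k hxy)

theorem const_mul_le_iterate_zero {b : ℝ} (hb : (fun _ => b) ≤ f 0) (k : ℕ) :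
    (fun _ => k * b) ≤ f^[k] 0 := by
  induction k with
  | zero => simp only [CharP.cast_eq_zero, zero_mul]; exact le_rfl
  | succ k ih =>
    have hstep := add_const_le_iterate htop hmono (y := 0) (by simpa using hb) k
    rw [← Function.iterate_succ_apply] at hstep
    intro i
    push_cast
    linarith [ih i, hstep i]

end

section Coordinates

variable {n : ℕ} [NeZero n] {f : (Fin n → ℝ) → (Fin n → ℝ)}
  (htop : ∀ (x : Fin n → ℝ) (h : ℝ), f (fun i => x i + h) = fun i => f x i + h)
  (hmono : Monotone f)
include htop hmono

theorem topV_iterate_le (x y : Fin n → ℝ) (k : ℕ) :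
    topV (f^[k] x) ≤ topV (f^[k] y) + topV (x - y) := by
  have hxy : x ≤ fun i => y i + topV (x - y) := fun i => by
    linarith [le_topV (x - y) i, Pi.sub_apply x y i]
  simpa only [topV_add_const] using topV_mono (iterate_le_add_const htop hmono hxy k)

theorem subadditive_topV_iterate_zero : Subadditive fun k => topV (f^[k] 0) := fun k l => by
  simpa only [Function.iterate_add_apply, sub_zero] using topV_iterate_le htop hmono (f^[l] 0) 0 k

theorem bddBelow_topV_iterate_zero_div :
    BddBelow (Set.range fun k : ℕ => topV (f^[k] 0) / k) := by
  set b := ⨅ i, f 0 i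
  have hb : (fun _ => b) ≤ f 0 := fun i => ciInf_le (Set.finite_range _).bddBelow i
  refine ⟨min b 0, ?_⟩
  rintro _ ⟨k, rfl⟩
  rcases k.eq_zero_or_pos with rfl | hk
  · simp
  · have hkb : k * b ≤ topV (f^[k] 0) :=
      le_topV_of_const_le (const_mul_le_iterate_zero htop hmono hb k)
    exact (min_le_left _ _).trans ((le_div_iff₀ (by exact_mod_cast hk)).2 (by linarith))

end Coordinates

end Topical

theorem top_subadditive_and_cycle_time_exists
    (n : ℕ) (hn : 0 < n) (f : (Fin n → ℝ) → (Fin n → ℝ))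
    (htop : ∀ (x : Fin n → ℝ) (h : ℝ), f (fun i => x i + h) = fun i => f x i + h)
    (hmono : Monotone f) :
    (∀ k l : ℕ, topV (f^[k + l] 0) ≤ topV (f^[k] 0) + topV (f^[l] 0)) ∧
    ∃ c : ℝ, ∀ x : Fin n → ℝ,
      Tendsto (fun k : ℕ => topV (f^[k] x) / k) atTop (nhds c) := by
  have : NeZero n := ⟨hn.ne'⟩
  have hsub := Topical.subadditive_topV_iterate_zero htop hmono
  refine ⟨hsub, hsub.lim, fun x => ?_⟩
  refine tendsto_div_natCast_of_bounded_sub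
    (hsub.tendsto_lim (Topical.bddBelow_topV_iterate_zero_div htop hmono))
    (a := -topV (-x)) (b := topV x) (fun k => ?_) (fun k => ?_)
  · have := Topical.topV_iterate_le htop hmono 0 x k
    rw [zero_sub] at this
    linarith
  · simpa only [sub_zero] using Topical.topV_iterate_le htop hmono x 0 k
end

section
/- Let n be a positive integer, let f : ℝ^n → ℝ^n be a topical function, and let c ∈ ℝ be its upper cycle time, i.e. ⊤(f^k(0))/k → c as k → ∞. Then there exists a ∈ ℝ with c ≤ a such that either Λ(f) = (a, ∞) or Λ(f) = [a, ∞). -/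
open Filter

theorem Lambda_is_halfline
    (n : ℕ) (hn : 0 < n) (f : (Fin n → ℝ) → (Fin n → ℝ))
    (htop : ∀ (x : Fin n → ℝ) (h : ℝ), f (fun i => x i + h) = fun i => f x i + h)
    (hmono : Monotone f)
    (c : ℝ)
    (hc : Tendsto (fun k : ℕ => topV (f^[k] 0) / k) atTop (nhds c)) :
    ∃ a : ℝ, c ≤ a ∧
      ({lam : ℝ | ∃ x : Fin n → ℝ, ∀ i, f x i ≤ x i + lam} = Set.Ioi a ∨
       {lam : ℝ | ∃ x : Fin n → ℝ, ∀ i, f x i ≤ x i + lam} = Set.Ici a) := by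
  haveI : Nonempty (Fin n) := ⟨⟨0, hn⟩⟩
  set Λ : Set ℝ := {lam : ℝ | ∃ x : Fin n → ℝ, ∀ i, f x i ≤ x i + lam} with hΛ
  have hup : ∀ {l m : ℝ}, l ∈ Λ → l ≤ m → m ∈ Λ := by
    rintro l m ⟨x, hx⟩ hlm
    exact ⟨x, fun i => (hx i).trans (by linarith)⟩
  have hne : Λ.Nonempty := ⟨topV (f 0), 0, fun i => by
    have := le_ciSup (Set.Finite.bddAbove (Set.finite_range (f 0))) i
    simpa [topV] using this⟩
  have hlb : ∀ l ∈ Λ, c ≤ l := by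
    rintro l ⟨x, hx⟩
    set h : ℝ := topV (fun i => - x i) with hdef
    have hh : ∀ i, (0:ℝ) ≤ x i + h := by
      intro i
      have := le_ciSup (Set.Finite.bddAbove (Set.finite_range (fun i => - x i))) i
      simp only [hdef, topV] at *
      linarith
    have key : ∀ k : ℕ, ∀ i, f^[k] 0 i ≤ x i + ((k : ℝ) * l + h) := by
      intro k
      induction k with
      | zero => intro i; simpa using hh i
      | succ k ih =>
        intro i
        have h1 : f^[k] 0 ≤ fun i => x i + ((k : ℝ) * l + h) := ih
        have h2 := hmono h1
        rw [htop x ((k : ℝ) * l + h)] at h2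
        have h3 := h2 i
        have h4 := hx i
        calc f^[k+1] 0 i = f (f^[k] 0) i := by rw [Function.iterate_succ_apply']
          _ ≤ f x i + ((k : ℝ) * l + h) := h3
          _ ≤ x i + (((k : ℝ) + 1) * l + h) := by linarith [hx i, mul_one l]; 
          _ = x i + (((k + 1 : ℕ) : ℝ) * l + h) := by push_cast; ring
    set C : ℝ := topV x + h with hCdef
    have hbd : ∀ k : ℕ, topV (f^[k] 0) ≤ C + (k : ℝ) * l := by
      intro k
      apply ciSup_le
      intro i
      have h1 := key k i
      have hxC : x i ≤ topV x := le_ciSup (Set.Finite.bddAbove (Set.finite_range x)) i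
      simp only [hCdef]
      linarith
    have hRHS : Tendsto (fun k : ℕ => C / (k : ℝ) + l) atTop (nhds l) := by
      have h0 := tendsto_const_div_atTop_nhds_zero_nat C
      simpa using h0.add (tendsto_const_nhds : Tendsto (fun _ : ℕ => l) atTop (nhds l))
    apply le_of_tendsto_of_tendsto hc hRHS
    filter_upwards [eventually_ge_atTop 1] with k hk
    have hk0 : (0:ℝ) < (k : ℝ) := by exact_mod_cast hk
    have h1 := hbd k
    calc topV (f^[k] 0) / (k : ℝ) ≤ (C + (k : ℝ) * l) / (k : ℝ) := by gcongr
      _ = C / (k : ℝ) + l := by field_simp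
  have hbdd : BddBelow Λ := ⟨c, hlb⟩
  refine ⟨sInf Λ, le_csInf hne hlb, ?_⟩
  by_cases hmem : sInf Λ ∈ Λ
  · right
    ext l
    constructor
    · intro hl; exact csInf_le hbdd hl
    · intro hl; exact hup hmem hl
  · left
    ext l
    constructor
    · intro hl
      rcases lt_or_eq_of_le (csInf_le hbdd hl) with h | h
      · exact h
      · exact absurd (h ▸ hl) hmem
    · intro hl
      obtain ⟨m, hm, hml⟩ := exists_lt_of_csInf_lt hne hl
      exact hup hm hml.le
end

section
/- Let n be a positive integer, let f : ℝ^n → ℝ^n be a topical function, let k be a positive integer and λ ∈ ℝ. If there exists x ∈ ℝ^n with f^k(x) ≤ x + λ·𝟙, then there exists y ∈ ℝ^n with f(y) ≤ y + (λ/k)·𝟙. -/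
theorem super_eigenspace_of_iterate
    (n : ℕ) (hn : 0 < n) (f : (Fin n → ℝ) → (Fin n → ℝ))
    (htop : ∀ (x : Fin n → ℝ) (h : ℝ), f (fun i => x i + h) = fun i => f x i + h)
    (hmono : Monotone f)
    (k : ℕ) (hk : 0 < k) (lam : ℝ)
    (hx : ∃ x : Fin n → ℝ, ∀ i, f^[k] x i ≤ x i + lam) :
    ∃ y : Fin n → ℝ, ∀ i, f y i ≤ y i + lam / k := by
  obtain ⟨x, hx⟩ := hx
  have hkR : (k : ℝ) ≠ 0 := Nat.cast_ne_zero.mpr hk.ne'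
  set c : ℝ := lam / k with hc
  have hlam : lam = k * c := by rw [hc]; field_simp
  have hne : (Finset.range k).Nonempty := Finset.nonempty_range_iff.mpr hk.ne'
  set y : Fin n → ℝ := fun i =>
      (Finset.range k).inf' hne (fun j => f^[j] x i - j * c) with hy
  have key : ∀ j < k, ∀ i, f y i ≤ f^[j + 1] x i - j * c := by
    intro j hj i
    have hle : y ≤ fun i => f^[j] x i + (-(j * c)) := by
      intro i
      have := Finset.inf'_le (fun j => f^[j] x i - (j : ℝ) * c)
        (Finset.mem_range.mpr hj)
      simpa [hy, sub_eq_add_neg] using this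
    have hmle := hmono hle
    rw [htop (f^[j] x) (-(j * c))] at hmle
    have h2 : f y i ≤ f (f^[j] x) i + -((j : ℝ) * c) := hmle i
    simp only [Function.iterate_succ_apply']
    linarith
  refine ⟨y, fun i => ?_⟩
  have hfin : f y i - c ≤ y i := by
    apply Finset.le_inf'
    intro j hj
    have hjk : j < k := Finset.mem_range.mp hj
    rcases Nat.eq_zero_or_pos j with rfl | hjpos
    · have h1 := key (k - 1) (Nat.sub_lt hk one_pos) i
      have h2 : k - 1 + 1 = k := Nat.succ_pred_eq_of_pos hk
      rw [h2] at h1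
      have h3 := hx i
      have h4 : ((k - 1 : ℕ) : ℝ) = (k : ℝ) - 1 := by
        push_cast [Nat.cast_sub hk]; ring
      rw [h4] at h1
      simp only [Function.iterate_zero, id_eq, Nat.cast_zero]
      nlinarith
    · obtain ⟨j', rfl⟩ : ∃ j', j = j' + 1 := ⟨j - 1, (Nat.succ_pred_eq_of_pos hjpos).symm⟩
      have h1 := key j' (by omega) i
      push_cast
      linarith
  linarith
end

section
/- Let n be a positive integer, let f : ℝ^n → ℝ^n be a topical function, and let c ∈ ℝ be its upper cycle time, i.e. ⊤(f^k(0))/k → c as k → ∞. Then inf Λ(f) = inf_{x ∈ ℝ^n} ⊤(f(x) − x) = c (in particular Λ(f) is nonempty and bounded below, and the function x ↦ ⊤(f(x) − x) is bounded below). -/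
open Filter

theorem generalised_collatz_wielandt
    (n : ℕ) (hn : 0 < n) (f : (Fin n → ℝ) → (Fin n → ℝ))
    (htop : ∀ (x : Fin n → ℝ) (h : ℝ), f (fun i => x i + h) = fun i => f x i + h)
    (hmono : Monotone f)
    (c : ℝ)
    (hc : Tendsto (fun k : ℕ => topV (f^[k] 0) / k) atTop (nhds c)) :
    {lam : ℝ | ∃ x : Fin n → ℝ, ∀ i, f x i ≤ x i + lam}.Nonempty ∧
    BddBelow {lam : ℝ | ∃ x : Fin n → ℝ, ∀ i, f x i ≤ x i + lam} ∧
    sInf {lam : ℝ | ∃ x : Fin n → ℝ, ∀ i, f x i ≤ x i + lam} = c ∧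
    BddBelow (Set.range fun x : Fin n → ℝ => topV fun i => f x i - x i) ∧
    sInf (Set.range fun x : Fin n → ℝ => topV fun i => f x i - x i) = c := by
  haveI : Nonempty (Fin n) := Fin.pos_iff_nonempty.mp hn
  have h_le_top : ∀ (x : Fin n → ℝ) (i : Fin n), x i ≤ topV x := by
    intro x i
    exact le_ciSup (Set.Finite.bddAbove (Set.finite_range x)) i
  have h_top_le : ∀ (x : Fin n → ℝ) (b : ℝ), (∀ i, x i ≤ b) → topV x ≤ b :=
    fun x b h => ciSup_le h
  -- iterates are topical
  have htopk : ∀ (k : ℕ) (x : Fin n → ℝ) (h : ℝ),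
      f^[k] (fun i => x i + h) = fun i => f^[k] x i + h := by
    intro k
    induction k with
    | zero => intro x h; simp
    | succ k ih =>
      intro x h
      rw [Function.iterate_succ_apply, htop, ih]
      funext i
      rw [Function.iterate_succ_apply]
  have hmonok : ∀ k : ℕ, Monotone (f^[k]) := fun k => hmono.iterate k
  -- Lower bound: every element of Λ is ≥ c
  have hA : ∀ lam : ℝ, (∃ x : Fin n → ℝ, ∀ i, f x i ≤ x i + lam) → c ≤ lam := by
    rintro lam ⟨x, hx⟩
    have hiter : ∀ (k : ℕ) (i : Fin n), f^[k] x i ≤ x i + k * lam := by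
      intro k
      induction k with
      | zero => intro i; simp
      | succ k ih =>
        intro i
        have h1 : f^[k + 1] x i ≤ f (fun i => x i + k * lam) i := by
          rw [Function.iterate_succ_apply']
          exact hmono (fun j => ih j) i
        rw [htop] at h1
        have := hx i
        push_cast
        calc f^[k + 1] x i ≤ f x i + k * lam := h1
          _ ≤ x i + lam + k * lam := by linarith
          _ = x i + (k + 1 : ℝ) * lam := by ring
    set m := topV (fun i => -(x i)) with hm
    have h0x : (fun _ : Fin n => (0:ℝ)) ≤ fun i => x i + m := by
      intro i
      have := h_le_top (fun i => -(x i)) i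
      simp only at this ⊢
      linarith
    have hk0 : ∀ (k : ℕ), topV (f^[k] 0) ≤ topV x + m + k * lam := by
      intro k
      apply h_top_le
      intro i
      have h1 : f^[k] (fun _ : Fin n => (0:ℝ)) i ≤ f^[k] (fun i => x i + m) i :=
        hmonok k h0x i
      rw [htopk] at h1
      simp only at h1
      have h2 := hiter k i
      have h3 := h_le_top x i
      have h0 : (0 : Fin n → ℝ) = fun _ : Fin n => (0:ℝ) := rfl
      rw [h0]
      linarith
    have hlim : Tendsto (fun k : ℕ => (topV x + m) / k + lam) atTop (nhds lam) := by
      have h1 : Tendsto (fun k : ℕ => (topV x + m) / k) atTop (nhds 0) :=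
        tendsto_const_div_atTop_nhds_zero_nat _
      simpa using h1.add tendsto_const_nhds
    refine le_of_tendsto_of_tendsto hc hlim ?_
    filter_upwards [eventually_ge_atTop 1] with k hk
    have hkpos : (0:ℝ) < k := by exact_mod_cast hk
    rw [div_le_iff₀ hkpos]
    have := hk0 k
    have hle : (topV x + m) / k * k = topV x + m := div_mul_cancel₀ _ (ne_of_gt hkpos)
    calc topV (f^[k] 0) ≤ topV x + m + k * lam := this
      _ = ((topV x + m) / k + lam) * k := by field_simp
  -- Upper bound: c + ε ∈ Λ for every ε > 0
  have hB : ∀ ε : ℝ, 0 < ε → ∃ z : Fin n → ℝ, ∀ i, f z i ≤ z i + (c + ε) := by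
    intro ε hε
    have hev : ∀ᶠ k : ℕ in atTop, topV (f^[k] 0) / k < c + ε :=
      hc.eventually_lt_const (by linarith)
    obtain ⟨K, hK1, hK2⟩ : ∃ K : ℕ, topV (f^[K] 0) / K < c + ε ∧ 1 ≤ K := by
      obtain ⟨K, h1, h2⟩ := (hev.and (eventually_ge_atTop 1)).exists
      exact ⟨K, h1, h2⟩
    set lam := c + ε with hlam
    have hKpos : (0:ℝ) < K := by exact_mod_cast hK2
    have hKtop : ∀ i, f^[K] 0 i ≤ K * lam := by
      intro i
      have h1 := h_le_top (f^[K] 0) i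
      have h2 : topV (f^[K] 0) ≤ K * lam := by
        rw [div_lt_iff₀ hKpos] at hK1
        linarith [hK1]
      linarith
    have hne : (Finset.range K).Nonempty := Finset.nonempty_range_iff.mpr (by omega)
    set z : Fin n → ℝ := fun i => (Finset.range K).inf' hne (fun j => f^[j] 0 i - j * lam)
      with hz
    have hzle : ∀ j < K, z ≤ fun i => f^[j] 0 i - j * lam := by
      intro j hj i
      exact Finset.inf'_le _ (Finset.mem_range.mpr hj)
    have key : ∀ j < K, ∀ i, f z i ≤ f^[j + 1] 0 i - j * lam := by
      intro j hj i
      have h1 : f z i ≤ f (fun i => f^[j] 0 i - j * lam) i := hmono (hzle j hj) i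
      have h2 : f (fun i => f^[j] 0 i - j * lam) = fun i => f (f^[j] 0) i + (-(j * lam)) := by
        have := htop (f^[j] 0) (-(j * lam))
        simpa [sub_eq_add_neg] using this
      rw [h2] at h1
      simp only at h1
      rw [Function.iterate_succ_apply']
      linarith [h1]
    refine ⟨z, fun i => ?_⟩
    have : f z i - lam ≤ z i := by
      have hzinf : z i = (Finset.range K).inf' hne fun j => f^[j] 0 i - (j : ℝ) * lam := rfl
      rw [hzinf]
      apply Finset.le_inf'
      intro j hj
      rw [Finset.mem_range] at hj
      rcases Nat.eq_zero_or_pos j with hj0 | hjpos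
      · subst hj0
        have h1 := key (K - 1) (by omega) i
        have h2 := hKtop i
        have hKc : ((K - 1 : ℕ) : ℝ) = (K : ℝ) - 1 := by
          push_cast [Nat.cast_sub hK2]; ring
        have h3 : (K - 1) + 1 = K := by omega
        rw [h3, hKc] at h1
        simp only [Function.iterate_zero_apply, Pi.zero_apply, Nat.cast_zero, zero_mul, sub_zero]
        linarith
      · obtain ⟨j', rfl⟩ : ∃ j', j = j' + 1 := ⟨j - 1, by omega⟩
        have h1 := key j' (by omega) i
        push_cast
        linarith
    linarith
  -- assembling everything
  obtain ⟨z1, hz1⟩ := hB 1 one_pos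
  have hΛne : {lam : ℝ | ∃ x : Fin n → ℝ, ∀ i, f x i ≤ x i + lam}.Nonempty :=
    ⟨c + 1, z1, hz1⟩
  have hΛbdd : BddBelow {lam : ℝ | ∃ x : Fin n → ℝ, ∀ i, f x i ≤ x i + lam} :=
    ⟨c, fun lam hlam => hA lam hlam⟩
  have hTbdd : BddBelow (Set.range fun x : Fin n → ℝ => topV fun i => f x i - x i) := by
    refine ⟨c, ?_⟩
    rintro y ⟨x, rfl⟩
    refine hA _ ⟨x, fun i => ?_⟩
    have := h_le_top (fun i => f x i - x i) i
    linarith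
  refine ⟨hΛne, hΛbdd, ?_, hTbdd, ?_⟩
  · apply le_antisymm
    · refine le_of_forall_pos_le_add ?_
      intro ε hε
      obtain ⟨z, hz⟩ := hB ε hε
      exact csInf_le hΛbdd ⟨z, hz⟩
    · exact le_csInf hΛne fun lam hlam => hA lam hlam
  · apply le_antisymm
    · refine le_of_forall_pos_le_add ?_
      intro ε hε
      obtain ⟨z, hz⟩ := hB ε hε
      have h1 : (topV fun i => f z i - z i) ≤ c + ε := by
        apply h_top_le
        intro i
        have := hz i
        linarith
      exact le_trans (csInf_le hTbdd ⟨z, rfl⟩) h1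
    · refine le_csInf ⟨_, ⟨0, rfl⟩⟩ ?_
      rintro y ⟨x, rfl⟩
      refine hA _ ⟨x, fun i => ?_⟩
      have := h_le_top (fun i => f x i - x i) i
      linarith
end

section
/- Let n be a positive integer, let f : ℝ^n → ℝ^n be a topical function with upper cycle time c ∈ ℝ (i.e. ⊤(f^k(0))/k → c as k → ∞), and let x ∈ ℝ^n. Then there exists an index i ∈ {1,…,n} such that for all k ∈ ℕ, x_i + k·c ≤ (f^k(x))_i. -/
/-!
A topical map is nonexpansive for the sup norm, so `u k = ⊤(f^k x - x)` differs from `⊤(f^k 0)`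
by a bounded amount and `u k / k → c`. Since `w k = u k - k c` is `o(k)`, for every window length
`N` and `ε > 0` there is a time `k` at which `w` is `ε`-almost maximal on `[k - N, k]`. Taking `i`
to be a coordinate where `f^k x - x` attains its maximum `u k`, nonexpansiveness of `f^m` gives
`(f^k x)_i ≤ (f^m x)_i + u (k - m)`, whence `x_i + m c - ε ≤ (f^m x)_i` for all `m ≤ N`.
Some coordinate is chosen for infinitely many `N` with `ε → 0`, and it works for every `m`.
-/

open Filter

open Topology

section topV

variable {n : ℕ}

theorem topV_le (hn : 0 < n) {x : Fin n → ℝ} {M : ℝ} (h : ∀ i, x i ≤ M) : topV x ≤ M :=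
  have : Nonempty (Fin n) := ⟨⟨0, hn⟩⟩
  ciSup_le h

theorem exists_topV_eq (hn : 0 < n) (x : Fin n → ℝ) : ∃ i, topV x = x i := by
  have : Nonempty (Fin n) := ⟨⟨0, hn⟩⟩
  obtain ⟨i, hi⟩ := Finite.exists_max x
  exact ⟨i, (topV_le hn hi).antisymm (le_topV x i)⟩

theorem apply_le_apply_add_dist (a b : Fin n → ℝ) (j : Fin n) : a j ≤ b j + dist a b := by
  have := (abs_sub_le_iff.1 ((Real.dist_eq _ _).symm.trans_le (dist_le_pi_dist a b j))).1
  linarith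

theorem abs_topV_sub_topV_le (hn : 0 < n) (a b : Fin n → ℝ) :
    |topV a - topV b| ≤ dist a b := by
  have key : ∀ a b : Fin n → ℝ, topV a ≤ topV b + dist a b := fun a b =>
    topV_le hn fun j => (apply_le_apply_add_dist a b j).trans (by linarith [le_topV b j])
  rw [abs_sub_le_iff]
  constructor
  · linarith [key a b]
  · linarith [key b a, dist_comm a b]

end topV

structure IsTopical_s10 {n : ℕ} (f : (Fin n → ℝ) → Fin n → ℝ) : Prop where
  add_const : ∀ (x : Fin n → ℝ) (h : ℝ), f (fun i => x i + h) = fun i => f x i + h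
  monotone : Monotone f

namespace IsTopical_s10

variable {n : ℕ} {f : (Fin n → ℝ) → Fin n → ℝ}

theorem iterate (hf : IsTopical_s10 f) (m : ℕ) : IsTopical_s10 f^[m] := by
  refine ⟨fun x h => ?_, hf.monotone.iterate m⟩
  induction m generalizing x with
  | zero => rfl
  | succ m ih =>
    rw [Function.iterate_succ_apply, Function.iterate_succ_apply, hf.add_const, ih]

theorem apply_le_apply_add (hf : IsTopical_s10 f) {a b : Fin n → ℝ} {h : ℝ}
    (hab : ∀ j, a j ≤ b j + h) (i : Fin n) : f a i ≤ f b i + h := by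
  have := hf.monotone (show a ≤ fun j => b j + h from hab)
  rw [hf.add_const] at this
  exact this i

theorem lipschitzWith_one (hf : IsTopical_s10 f) : LipschitzWith 1 f := by
  refine LipschitzWith.of_dist_le_mul fun a b => ?_
  rw [NNReal.coe_one, one_mul, dist_pi_le_iff dist_nonneg]
  intro i
  rw [Real.dist_eq, abs_sub_le_iff]
  constructor
  · linarith [hf.apply_le_apply_add (apply_le_apply_add_dist a b) i]
  · linarith [hf.apply_le_apply_add (apply_le_apply_add_dist b a) i, dist_comm a b]

theorem abs_topV_iterate_sub_sub_le (hf : IsTopical_s10 f) (hn : 0 < n) (x : Fin n → ℝ) (k : ℕ) :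
    |topV (f^[k] x - x) - topV (f^[k] 0)| ≤ 2 * ‖x‖ := calc
  _ ≤ dist (f^[k] x - x) (f^[k] 0) := abs_topV_sub_topV_le hn _ _
  _ = ‖(f^[k] x - f^[k] 0) - x‖ := by rw [dist_eq_norm, sub_right_comm]
  _ ≤ dist (f^[k] x) (f^[k] 0) + ‖x‖ := by rw [dist_eq_norm]; exact norm_sub_le _ _
  _ ≤ dist x 0 + ‖x‖ := by
    gcongr
    simpa using (hf.lipschitzWith_one.iterate k).dist_le_mul x 0
  _ = 2 * ‖x‖ := by rw [dist_zero_right]; ring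

end IsTopical_s10

theorem tendsto_div_natCast_of_abs_sub_le {u v : ℕ → ℝ} {c C : ℝ}
    (hv : Tendsto (fun k => v k / k) atTop (𝓝 c)) (huv : ∀ k, |u k - v k| ≤ C) :
    Tendsto (fun k => u k / k) atTop (𝓝 c) := by
  have hdiff : Tendsto (fun k : ℕ => (u k - v k) / k) atTop (𝓝 0) := by
    refine squeeze_zero_norm (fun k => ?_) (tendsto_const_div_atTop_nhds_zero_nat C)
    rw [norm_div, Real.norm_eq_abs, Real.norm_natCast]
    exact div_le_div_of_nonneg_right (huv k) k.cast_nonneg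
  have := hv.add hdiff
  rw [add_zero] at this
  exact this.congr fun k => by ring

theorem exists_window_le_add_of_tendsto_div {w : ℕ → ℝ}
    (hw : Tendsto (fun k => w k / k) atTop (𝓝 0)) {N : ℕ} (hN : 0 < N) {ε : ℝ} (hε : 0 < ε) :
    ∃ k, N ≤ k ∧ ∀ m ≤ N, w (k - m) ≤ w k + ε := by
  by_contra! H
  obtain ⟨M, hM⟩ := ((Set.finite_lt_nat N).image w).bddAbove
  have hN' : (0 : ℝ) < N := by exact_mod_cast hN
  -- Otherwise every `k ≥ N` has an earlier point, at most `N` steps back, where `w` is larger by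
  -- `ε`; descending along these forces `w` to decrease linearly, which is not `o(k)`.
  have bound : ∀ k, N * w k + ε * k ≤ N * M + ε * N := by
    intro k
    induction k using Nat.strong_induction_on with
    | _ k ih =>
      rcases lt_or_ge k N with hk | hk
      · have hkN : (k : ℝ) ≤ N := by exact_mod_cast hk.le
        nlinarith [hM ⟨k, hk, rfl⟩]
      · obtain ⟨m, hmN, hm⟩ := H k hk
        have hm0 : m ≠ 0 := by rintro rfl; rw [Nat.sub_zero] at hm; linarith
        have hmN' : (m : ℝ) ≤ N := by exact_mod_cast hmN
        have hcast : ((k - m : ℕ) : ℝ) = k - m := Nat.cast_sub (by omega)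
        have := ih (k - m) (by omega)
        rw [hcast] at this
        nlinarith [mul_lt_mul_of_pos_left hm hN']
  have hlim : Tendsto (fun k : ℕ => (M + ε) / k - ε / N) atTop (𝓝 (0 - ε / N)) :=
    (tendsto_const_div_atTop_nhds_zero_nat _).sub_const _
  have hle : ∀ᶠ k : ℕ in atTop, w k / k ≤ (M + ε) / k - ε / N := by
    filter_upwards [eventually_gt_atTop 0] with k hk
    have hk' : (0 : ℝ) < k := by exact_mod_cast hk
    rw [div_le_iff₀ hk']
    field_simp
    linarith [bound k]
  have := le_of_tendsto_of_tendsto hw hlim hle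
  linarith [div_pos hε hN']

theorem IsTopical_s10.exists_forall_le_iterate_apply_add {n : ℕ} {f : (Fin n → ℝ) → Fin n → ℝ}
    (hf : IsTopical_s10 f) (hn : 0 < n) {c : ℝ}
    (hc : Tendsto (fun k : ℕ => topV (f^[k] 0) / k) atTop (𝓝 c)) (x : Fin n → ℝ)
    (N : ℕ) {ε : ℝ} (hε : 0 < ε) :
    ∃ i, ∀ m ≤ N, x i + m * c ≤ f^[m] x i + ε := by
  set u : ℕ → ℝ := fun k => topV (f^[k] x - x)
  have hu : Tendsto (fun k => u k / k) atTop (𝓝 c) :=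
    tendsto_div_natCast_of_abs_sub_le hc (hf.abs_topV_iterate_sub_sub_le hn x)
  have hw : Tendsto (fun k : ℕ => (u k - k * c) / k) atTop (𝓝 0) := by
    have := hu.sub_const c
    rw [sub_self] at this
    refine this.congr' ?_
    filter_upwards [eventually_ne_atTop 0] with k hk
    field_simp
  obtain ⟨k, hNk, hk⟩ := exists_window_le_add_of_tendsto_div hw N.succ_pos hε
  obtain ⟨i, hi⟩ := exists_topV_eq hn (f^[k] x - x)
  refine ⟨i, fun m hm => ?_⟩
  have hsplit : f^[k] x i ≤ f^[m] x i + u (k - m) := by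
    rw [← Nat.add_sub_cancel' (show m ≤ k by omega), Function.iterate_add_apply,
      Nat.add_sub_cancel_left]
    exact (hf.iterate m).apply_le_apply_add
      (fun j => by linarith [le_topV (f^[k - m] x - x) j, Pi.sub_apply (f^[k - m] x) x j]) i
  have hwin := hk m (by omega)
  rw [Nat.cast_sub (show m ≤ k by omega)] at hwin
  have hui : u k = f^[k] x i - x i := hi
  linarith

theorem exists_forall_le_of_forall_exists_le_add {ι : Type*} [Finite ι] {a b : ℕ → ι → ℝ}
    (h : ∀ N : ℕ, ∀ ε > 0, ∃ i, ∀ m ≤ N, a m i ≤ b m i + ε) : ∃ i, ∀ m, a m i ≤ b m i := by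
  choose sel hsel using fun N : ℕ => h N (1 / (N + 1)) Nat.one_div_pos_of_nat
  obtain ⟨i, hi⟩ := Finite.exists_infinite_fiber sel
  refine ⟨i, fun m => le_of_forall_pos_le_add fun δ hδ => ?_⟩
  obtain ⟨P, hP⟩ := exists_nat_one_div_lt hδ
  obtain ⟨N, hNi, hN⟩ := (Set.infinite_coe_iff.mp hi).exists_gt (max m P)
  have hsmall : (1 : ℝ) / (N + 1) ≤ 1 / (P + 1) := Nat.one_div_le_one_div (by omega)
  have := hsel N m (by omega)
  rw [show sel N = i from hNi] at this
  linarith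

theorem coordinate_realising_cycle_time
    (n : ℕ) (hn : 0 < n) (f : (Fin n → ℝ) → (Fin n → ℝ))
    (htop : ∀ (x : Fin n → ℝ) (h : ℝ), f (fun i => x i + h) = fun i => f x i + h)
    (hmono : Monotone f)
    (c : ℝ)
    (hc : Tendsto (fun k : ℕ => topV (f^[k] 0) / k) atTop (nhds c))
    (x : Fin n → ℝ) :
    ∃ i : Fin n, ∀ k : ℕ, x i + k * c ≤ f^[k] x i :=
  exists_forall_le_of_forall_exists_le_add fun N _ hε =>
    IsTopical_s10.exists_forall_le_iterate_apply_add ⟨htop, hmono⟩ hn hc x N hε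
end

section
/- Let n be a positive integer and let f : ℝ^n → ℝ^n be a topical function with upper cycle time c ∈ ℝ (i.e. ⊤(f^k(0))/k → c as k → ∞). Then there exists an index i ∈ {1,…,n} such that for every y ∈ ℝ^n, (f^k(y))_i / k → c as k → ∞. -/
open Filter

theorem coordinate_converging_to_cycle_time
    (n : ℕ) (hn : 0 < n) (f : (Fin n → ℝ) → (Fin n → ℝ))
    (htop : ∀ (x : Fin n → ℝ) (h : ℝ), f (fun i => x i + h) = fun i => f x i + h)
    (hmono : Monotone f)
    (c : ℝ)
    (hc : Tendsto (fun k : ℕ => topV (f^[k] 0) / k) atTop (nhds c)) :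
    ∃ i : Fin n, ∀ y : Fin n → ℝ,
      Tendsto (fun k : ℕ => f^[k] y i / k) atTop (nhds c) := by
  haveI : Nonempty (Fin n) := ⟨⟨0, hn⟩⟩
  -- basic facts about topV
  have hbdd : ∀ x : Fin n → ℝ, BddAbove (Set.range x) := fun x => (Set.finite_range x).bddAbove
  have hle_top : ∀ (x : Fin n → ℝ) (i : Fin n), x i ≤ topV x := fun x i => le_ciSup (hbdd x) i
  have htop_le : ∀ (x : Fin n → ℝ) (B : ℝ), (∀ i, x i ≤ B) → topV x ≤ B := fun x B h => ciSup_le h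
  have htop_argmax : ∀ x : Fin n → ℝ, ∃ i, topV x = x i := by
    intro x
    obtain ⟨i, hi⟩ := Finite.exists_max x
    exact ⟨i, le_antisymm (htop_le x _ hi) (hle_top x i)⟩
  -- iterates monotone and additively homogeneous
  have hmono' : ∀ m : ℕ, Monotone (f^[m]) := fun m => hmono.iterate m
  have hit : ∀ (m : ℕ) (x : Fin n → ℝ) (h : ℝ),
      f^[m] (fun i => x i + h) = fun i => f^[m] x i + h := by
    intro m
    induction m with
    | zero => intro x h; simp
    | succ m ih =>
      intro x h
      rw [Function.iterate_succ_apply', Function.iterate_succ_apply', ih x h, htop]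
  -- A m = topV (f^[m] 0)
  set A : ℕ → ℝ := fun m => topV (f^[m] 0) with hA
  have hA0 : A 0 = 0 := by
    simp only [hA, Function.iterate_zero_apply, topV]
    simp [ciSup_const]
  -- subadditivity : A (m + k) ≤ A m + A k
  have hsub : ∀ m k : ℕ, A (m + k) ≤ A m + A k := by
    intro m k
    apply htop_le
    intro i
    have h1 : f^[k] 0 ≤ fun j => (0 : Fin n → ℝ) j + A k := by
      intro j
      simpa using hle_top (f^[k] 0) j
    have h2 : f^[m] (f^[k] 0) ≤ f^[m] (fun j => (0 : Fin n → ℝ) j + A k) := hmono' m h1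
    have h3 : f^[m] (fun j => (0 : Fin n → ℝ) j + A k) = fun i => f^[m] 0 i + A k := hit m 0 (A k)
    have h4 : f^[m + k] 0 i ≤ f^[m] 0 i + A k := by
      rw [Function.iterate_add_apply]
      calc f^[m] (f^[k] 0) i ≤ f^[m] (fun j => (0 : Fin n → ℝ) j + A k) i := h2 i
        _ = f^[m] 0 i + A k := by rw [h3]
    calc f^[m + k] 0 i ≤ f^[m] 0 i + A k := h4
      _ ≤ A m + A k := by have := hle_top (f^[m] 0) i; linarith
  -- Fekete lower bound : m * c ≤ A m
  have hfek : ∀ m : ℕ, (m : ℝ) * c ≤ A m := by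
    intro m
    rcases Nat.eq_zero_or_pos m with hm | hm
    · subst hm; simp [hA0]
    · -- A (q * m) ≤ q * A m
      have hmul : ∀ q : ℕ, A (q * m) ≤ (q : ℝ) * A m := by
        intro q
        induction q with
        | zero => simp [hA0]
        | succ q ih =>
          have : (q + 1) * m = q * m + m := by ring
          rw [this]
          calc A (q * m + m) ≤ A (q * m) + A m := hsub _ _
            _ ≤ (q : ℝ) * A m + A m := by linarith
            _ = ((q + 1 : ℕ) : ℝ) * A m := by push_cast; ring
      have htends : Tendsto (fun q : ℕ => A (q * m) / ((q * m : ℕ) : ℝ)) atTop (nhds c) := by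
        have hcomp : Tendsto (fun q : ℕ => q * m) atTop atTop := by
          apply tendsto_atTop_mono (fun q => Nat.le_mul_of_pos_right q hm) tendsto_id
        exact hc.comp hcomp
      have hbound : ∀ᶠ q : ℕ in atTop, A (q * m) / ((q * m : ℕ) : ℝ) ≤ A m / m := by
        filter_upwards [eventually_ge_atTop 1] with q hq
        have hq0 : (0 : ℝ) < (q : ℝ) := by exact_mod_cast hq
        have hm0 : (0 : ℝ) < (m : ℝ) := by exact_mod_cast hm
        have hcast : ((q * m : ℕ) : ℝ) = (q : ℝ) * (m : ℝ) := by push_cast; ring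
        rw [hcast]
        have hqm0 : (0 : ℝ) < (q : ℝ) * m := mul_pos hq0 hm0
        calc A (q * m) / ((q : ℝ) * m) ≤ ((q : ℝ) * A m) / ((q : ℝ) * m) :=
              (div_le_div_iff_of_pos_right hqm0).mpr (hmul q)
          _ = A m / m := mul_div_mul_left _ _ (ne_of_gt hq0)
      have : c ≤ A m / m := le_of_tendsto htends hbound
      have hm0 : (0 : ℝ) < (m : ℝ) := by exact_mod_cast hm
      calc (m : ℝ) * c ≤ (m : ℝ) * (A m / m) := by nlinarith
        _ = A m := by field_simp
  -- ε and running max εs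
  set ε : ℕ → ℝ := fun m => A m - m * c with hε
  have hε0 : ∀ m, 0 ≤ ε m := fun m => by simp only [hε]; linarith [hfek m]
  have hrne : ∀ m : ℕ, (Finset.range (m + 1)).Nonempty := fun m => Finset.nonempty_range_iff.mpr (Nat.succ_ne_zero m)
  set εs : ℕ → ℝ := fun m => (Finset.range (m + 1)).sup' (hrne m) ε with hεs
  have hεεs : ∀ j m : ℕ, j ≤ m → ε j ≤ εs m := by
    intro j m hjm
    exact Finset.le_sup' ε (Finset.mem_range.mpr (Nat.lt_succ_of_le hjm))
  have hεs_mono : Monotone εs := by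
    intro a b hab
    apply Finset.sup'_le
    intro j hj
    exact hεεs j b (le_trans (Nat.lt_succ_iff.mp (Finset.mem_range.mp hj)) hab)
  -- u m i = f^[m] 0 i - m * c
  set u : ℕ → Fin n → ℝ := fun m i => f^[m] 0 i - m * c with hu
  have hu_le : ∀ m i, u m i ≤ ε m := by
    intro m i
    simp only [hu, hε]
    have := hle_top (f^[m] 0) i
    linarith
  have hu_argmax : ∀ m, ∃ i, u m i = ε m := by
    intro m
    obtain ⟨i, hi⟩ := htop_argmax (f^[m] 0)
    exact ⟨i, by simp only [hu, hε, hA]; rw [← hi]⟩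
  -- w T i = sup_{k} (u (T+k) i - εs (T+k))
  have hwub : ∀ T i, ∀ z ∈ Set.range (fun k : ℕ => u (T + k) i - εs (T + k)), z ≤ 0 := by
    rintro T i z ⟨k, rfl⟩
    have h1 := hu_le (T + k) i
    have h2 := hεεs (T + k) (T + k) le_rfl
    show u (T + k) i - εs (T + k) ≤ 0
    linarith
  have hwbdd : ∀ T i, BddAbove (Set.range (fun k : ℕ => u (T + k) i - εs (T + k))) :=
    fun T i => ⟨0, fun z hz => hwub T i z hz⟩
  set w : ℕ → Fin n → ℝ := fun T i => ⨆ k : ℕ, (u (T + k) i - εs (T + k)) with hw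
  have hw_ge : ∀ T i (k : ℕ), u (T + k) i - εs (T + k) ≤ w T i := by
    intro T i k
    exact le_ciSup (hwbdd T i) k
  have hw_le : ∀ T i (B : ℝ), (∀ k : ℕ, u (T + k) i - εs (T + k) ≤ B) → w T i ≤ B := by
    intro T i B h
    exact ciSup_le h
  have hw_anti : ∀ (i : Fin n) (T T' : ℕ), T ≤ T' → w T' i ≤ w T i := by
    intro i T T' hTT
    apply hw_le
    intro k
    have hidx : T + (T' - T + k) = T' + k := by omega
    calc u (T' + k) i - εs (T' + k) = u (T + (T' - T + k)) i - εs (T + (T' - T + k)) := by rw [hidx]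
      _ ≤ w T i := hw_ge T i _
  -- the key step : w (T+1) i ≤ f (w T) i - c
  have hstep : ∀ T i, w (T + 1) i ≤ f (w T) i - c := by
    intro T i
    apply hw_le
    intro k
    set m := T + k with hm
    have hidx : T + 1 + k = m + 1 := by omega
    rw [hidx]
    -- p = fun j => u m j - εs m  is ≤ w T
    have hp_le : (fun j => u m j - εs m) ≤ w T := by
      intro j
      exact hw_ge T j k
    have hfp : f (fun j => u m j - εs m) = fun i => f^[m + 1] 0 i + (-((m : ℝ) * c) - εs m) := by
      have hshape : (fun j => u m j - εs m) = fun j => f^[m] 0 j + (-((m : ℝ) * c) - εs m) := by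
        funext j
        simp only [hu]
        ring
      rw [hshape, htop]
      funext i
      rw [Function.iterate_succ_apply']
    have h1 : u (m + 1) i - εs (m + 1) ≤ u (m + 1) i - εs m := by
      have := hεs_mono (Nat.le_succ m)
      linarith
    have h2 : u (m + 1) i - εs m = f (fun j => u m j - εs m) i - c := by
      rw [hfp]
      simp only [hu]
      push_cast
      ring
    have h3 : f (fun j => u m j - εs m) i ≤ f (w T) i := hmono hp_le i
    linarith
  -- chain : w m i ≤ f^[m] (w 0) i - m * c
  have hchain : ∀ (m : ℕ) (i : Fin n), w m i ≤ f^[m] (w 0) i - m * c := by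
    intro m
    induction m with
    | zero => intro i; simp
    | succ m ih =>
      intro i
      have h1 : w (m + 1) i ≤ f (w m) i - c := hstep m i
      have h2 : w m ≤ fun j => f^[m] (w 0) j + (-((m : ℝ) * c)) := by
        intro j
        have := ih j
        simp only [Pi.sub_apply]
        linarith [ih j]
      have h3 : f (w m) i ≤ f (fun j => f^[m] (w 0) j + (-((m : ℝ) * c))) i := hmono h2 i
      have h4 : f (fun j => f^[m] (w 0) j + (-((m : ℝ) * c))) = fun i => f^[m + 1] (w 0) i + (-((m : ℝ) * c)) := by
        rw [htop]
        funext i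
        rw [Function.iterate_succ_apply']
      rw [h4] at h3
      have h3' : f (w m) i ≤ f^[m + 1] (w 0) i + -((m : ℝ) * c) := h3
      push_cast
      linarith
  -- existence of γ₀ with recurrent near-record times
  obtain ⟨γ₀, hγ⟩ : ∃ γ₀ : ℝ, ∀ T : ℕ, ∃ m : ℕ, T ≤ m ∧ -γ₀ ≤ ε m - εs m := by
    by_cases hb : ∃ S : ℝ, ∀ j : ℕ, ε j ≤ S
    · obtain ⟨S, hS⟩ := hb
      refine ⟨S, fun T => ⟨T, le_rfl, ?_⟩⟩
      have h1 : εs T ≤ S := Finset.sup'_le _ _ (fun j _ => hS j)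
      have h2 := hε0 T
      linarith
    · push_neg at hb
      refine ⟨0, fun T => ?_⟩
      obtain ⟨j, hj⟩ := hb (εs T)
      obtain ⟨j₀, hmem, heq⟩ := Finset.exists_mem_eq_sup' (hrne j) ε
      have hj₀j : j₀ ≤ j := Nat.lt_succ_iff.mp (Finset.mem_range.mp hmem)
      have hεj₀ : ε j₀ = εs j := heq.symm
      have hTj₀ : T ≤ j₀ := by
        by_contra hcon
        push_neg at hcon
        have h1 : ε j₀ ≤ εs T := hεεs j₀ T (le_of_lt hcon)
        have h2 : ε j ≤ εs j := hεεs j j le_rfl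
        rw [hεj₀] at h1
        linarith
      have hrec : εs j₀ = ε j₀ := by
        apply le_antisymm
        · calc εs j₀ ≤ εs j := hεs_mono hj₀j
            _ = ε j₀ := hεj₀.symm
        · exact hεεs j₀ j₀ le_rfl
      exact ⟨j₀, hTj₀, by rw [hrec]; simp⟩
  -- for each T, some coordinate of w T is ≥ -γ₀
  have htopw : ∀ T : ℕ, ∃ i, -γ₀ ≤ w T i := by
    intro T
    obtain ⟨m, hTm, hm⟩ := hγ T
    obtain ⟨i, hi⟩ := hu_argmax m
    refine ⟨i, ?_⟩
    have hidx : T + (m - T) = m := by omega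
    have h1 : u m i - εs m ≤ w T i := by
      calc u m i - εs m = u (T + (m - T)) i - εs (T + (m - T)) := by rw [hidx]
        _ ≤ w T i := hw_ge T i _
    rw [hi] at h1
    linarith
  -- a single good coordinate
  obtain ⟨i, hgood⟩ : ∃ i : Fin n, ∀ T : ℕ, -γ₀ ≤ w T i := by
    by_contra hcon
    push_neg at hcon
    choose T hT using hcon
    set T' : ℕ := Finset.univ.sup T with hT'
    obtain ⟨i, hi⟩ := htopw T'
    have h1 : w T' i ≤ w (T i) i := hw_anti i (T i) T' (Finset.le_sup (Finset.mem_univ i))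
    have h2 := hT i
    linarith
  refine ⟨i, ?_⟩
  intro y
  -- constants
  set C₀ : ℝ := ⨆ j, (w 0 j - y j) with hC₀
  have hC₀bdd : BddAbove (Set.range fun j => w 0 j - y j) := (Set.finite_range _).bddAbove
  have hC₀le : ∀ j, w 0 j - C₀ ≤ y j := by
    intro j
    have := le_ciSup hC₀bdd j
    simp only [hC₀] at *
    linarith
  set Y₀ : ℝ := topV y with hY₀
  have hY₀le : ∀ j, y j ≤ Y₀ := fun j => hle_top y j
  -- lower bound : -(γ₀ + C₀) + m * c ≤ f^[m] y i
  have hlower : ∀ m : ℕ, -(γ₀ + C₀) + m * c ≤ f^[m] y i := by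
    intro m
    have h1 : (fun j => w 0 j + (-C₀)) ≤ y := by
      intro j
      have := hC₀le j
      simpa [sub_eq_add_neg] using this
    have h2 : f^[m] (fun j => w 0 j + (-C₀)) ≤ f^[m] y := hmono' m h1
    have h3 : f^[m] (fun j => w 0 j + (-C₀)) = fun i => f^[m] (w 0) i + (-C₀) := hit m (w 0) (-C₀)
    have h4 : f^[m] (w 0) i + (-C₀) ≤ f^[m] y i := by
      calc f^[m] (w 0) i + (-C₀) = f^[m] (fun j => w 0 j + (-C₀)) i := by rw [h3]
        _ ≤ f^[m] y i := h2 i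
    have h5 : w m i ≤ f^[m] (w 0) i - m * c := hchain m i
    have h6 : -γ₀ ≤ w m i := hgood m
    linarith
  -- upper bound : f^[m] y i ≤ A m + Y₀
  have hupper : ∀ m : ℕ, f^[m] y i ≤ A m + Y₀ := by
    intro m
    have h1 : y ≤ fun j => (0 : Fin n → ℝ) j + Y₀ := by
      intro j
      simpa using hY₀le j
    have h2 : f^[m] y ≤ f^[m] (fun j => (0 : Fin n → ℝ) j + Y₀) := hmono' m h1
    have h3 : f^[m] (fun j => (0 : Fin n → ℝ) j + Y₀) = fun i => f^[m] 0 i + Y₀ := hit m 0 Y₀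
    calc f^[m] y i ≤ f^[m] (fun j => (0 : Fin n → ℝ) j + Y₀) i := h2 i
      _ = f^[m] 0 i + Y₀ := by rw [h3]
      _ ≤ A m + Y₀ := by have := hle_top (f^[m] 0) i; linarith
  -- squeeze
  have key : Tendsto (fun m : ℕ => (f^[m] y i - m * c) / m) atTop (nhds 0) := by
    have hlow : Tendsto (fun m : ℕ => (-(γ₀ + C₀)) / (m : ℝ)) atTop (nhds 0) :=
      tendsto_const_div_atTop_nhds_zero_nat _
    have hup : Tendsto (fun m : ℕ => (ε m + Y₀) / (m : ℝ)) atTop (nhds 0) := by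
      have e1 : Tendsto (fun m : ℕ => (A m / m - c) + Y₀ / m) atTop (nhds ((c - c) + 0)) :=
        (hc.sub_const c).add (tendsto_const_div_atTop_nhds_zero_nat Y₀)
      have e2 : ((c - c) + 0 : ℝ) = 0 := by ring
      rw [e2] at e1
      apply e1.congr'
      filter_upwards [eventually_ge_atTop 1] with m hm
      have hm0 : ((m : ℝ)) ≠ 0 := by
        have : (0 : ℝ) < m := by exact_mod_cast hm
        linarith
      simp only [hε]
      field_simp
    apply tendsto_of_tendsto_of_tendsto_of_le_of_le' hlow hup
    · filter_upwards [eventually_ge_atTop 1] with m hm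
      have hm0 : (0 : ℝ) < (m : ℝ) := by exact_mod_cast hm
      apply (div_le_div_iff_of_pos_right hm0).mpr
      have := hlower m
      linarith
    · filter_upwards [eventually_ge_atTop 1] with m hm
      have hm0 : (0 : ℝ) < (m : ℝ) := by exact_mod_cast hm
      apply (div_le_div_iff_of_pos_right hm0).mpr
      have := hupper m
      simp only [hε]
      linarith
  have final : Tendsto (fun m : ℕ => (f^[m] y i - m * c) / m + c) atTop (nhds (0 + c)) :=
    key.add_const c
  rw [zero_add] at final
  apply final.congr'
  filter_upwards [eventually_ge_atTop 1] with m hm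
  have hm0 : ((m : ℝ)) ≠ 0 := by
    have : (0 : ℝ) < m := by exact_mod_cast hm
    linarith
  field_simp
  ring
end

section
/- Let n be a positive integer, let f : ℝ^n → ℝ^n be a topical function and let h ∈ ℝ. Then f has an eigenvector with eigenvalue h (i.e. there exists v ∈ ℝ^n with f(v) = v + h·𝟙) if and only if there exist x ∈ ℝ^n and M ≥ 0 such that ‖f^k(x) − k·h·𝟙‖_∞ ≤ M for all k ∈ ℕ. -/
/-! Subtracting `h` turns eigenvectors of `f` into fixed points of the topical map
`g = f - h`, and trajectories `f^[k] x - k h` into orbits of `g`. Topical maps are nonexpansive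
for the sup norm, so once one orbit of `g` is bounded, all are. The coordinatewise limsup `v` of a
bounded orbit satisfies `v ≤ g v`; the orbit of `v` is then increasing and bounded above, and by
continuity its limit is a fixed point. -/

open Filter Set Function Bornology Topology

section OrbitLimits

variable {α : Type*} [ConditionallyCompleteLattice α] [TopologicalSpace α] {g : α → α}

theorem exists_le_map_of_bddBelow_of_bddAbove_orbit [OrderClosedTopology α]
    [InfConvergenceClass α] (hmono : Monotone g) (hcont : Continuous g) {x : α}
    (hbelow : BddBelow (range fun k => g^[k] x)) (habove : BddAbove (range fun k => g^[k] x)) :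
    ∃ v, v ≤ g v := by
  -- `⨅ m, s m` is the limsup of the orbit
  set s : ℕ → α := fun m => ⨆ k, g^[k + m] x
  have hs_bdd : ∀ m, BddAbove (range fun k => g^[k + m] x) := fun m =>
    habove.mono (range_subset_iff.2 fun k => mem_range_self (k + m))
  have hs_anti : Antitone s := antitone_nat_of_succ_le fun m =>
    ciSup_le fun k => le_ciSup_of_le (hs_bdd m) (k + 1) (by rw [add_right_comm, add_assoc])
  have hs_below : BddBelow (range s) := by
    obtain ⟨b, hb⟩ := hbelow
    exact ⟨b, forall_mem_range.2 fun m =>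
      (hb ⟨m, rfl⟩).trans (le_ciSup_of_le (hs_bdd m) 0 (by rw [zero_add]))⟩
  have hs_succ : ∀ m, s (m + 1) ≤ g (s m) := fun m => ciSup_le fun k => by
    rw [← add_assoc, iterate_succ_apply']
    exact hmono (le_ciSup (hs_bdd m) k)
  have hlim : Tendsto s atTop (𝓝 (⨅ m, s m)) := tendsto_atTop_ciInf hs_anti hs_below
  exact ⟨_, le_of_tendsto_of_tendsto' (hlim.comp (tendsto_add_atTop_nat 1))
    ((hcont.tendsto _).comp hlim) hs_succ⟩

theorem exists_isFixedPt_of_le_map [SupConvergenceClass α] [T2Space α] (hmono : Monotone g)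
    (hcont : Continuous g) {v : α} (hv : v ≤ g v) (habove : BddAbove (range fun k => g^[k] v)) :
    ∃ w, IsFixedPt g w :=
  ⟨_, isFixedPt_of_tendsto_iterate
    (tendsto_atTop_ciSup (hmono.monotone_iterate_of_le_map hv) habove) hcont.continuousAt⟩

end OrbitLimits

theorem LipschitzWith.isBounded_range_iterate {X : Type*} [PseudoMetricSpace X] {g : X → X}
    (hg : LipschitzWith 1 g) {x : X} (hx : IsBounded (range fun k => g^[k] x)) (y : X) :
    IsBounded (range fun k => g^[k] y) := by
  obtain ⟨r, hr⟩ := (Metric.isBounded_iff_subset_closedBall x).1 hx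
  refine (Metric.isBounded_iff_subset_closedBall x).2 ⟨r + dist y x, range_subset_iff.2 fun k => ?_⟩
  have hxk : dist (g^[k] x) x ≤ r := hr ⟨k, rfl⟩
  have hyk : dist (g^[k] y) (g^[k] x) ≤ dist y x := by
    simpa using (hg.iterate k).dist_le_mul y x
  exact Metric.mem_closedBall.2 ((dist_triangle _ _ _).trans (by linarith))

theorem exists_isFixedPt_of_isBounded_orbit {α : Type*} [ConditionallyCompleteLattice α]
    [PseudoMetricSpace α] [T2Space α] [OrderClosedTopology α] [SupConvergenceClass α]
    [InfConvergenceClass α] [IsOrderBornology α] {g : α → α} (hmono : Monotone g)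
    (hlip : LipschitzWith 1 g) {x : α} (hx : IsBounded (range fun k => g^[k] x)) :
    ∃ w, IsFixedPt g w := by
  obtain ⟨v, hv⟩ := exists_le_map_of_bddBelow_of_bddAbove_orbit hmono hlip.continuous
    hx.bddBelow hx.bddAbove
  exact exists_isFixedPt_of_le_map hmono hlip.continuous hv
    (hlip.isBounded_range_iterate hx v).bddAbove

section Topical

variable {ι : Type*} {f : (ι → ℝ) → ι → ℝ}
  (htop : ∀ (x : ι → ℝ) (c : ℝ), f (fun i => x i + c) = fun i => f x i + c)
include htop

theorem le_add_const_of_topical (hmono : Monotone f) {x y : ι → ℝ} {c : ℝ}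
    (hxy : ∀ i, x i ≤ y i + c) (i : ι) : f x i ≤ f y i + c := by
  simpa only [htop] using hmono (show x ≤ fun i => y i + c from hxy) i

theorem lipschitzWith_one_of_topical [Fintype ι] (hmono : Monotone f) : LipschitzWith 1 f := by
  refine LipschitzWith.of_dist_le_mul fun x y => ?_
  rw [NNReal.coe_one, one_mul, dist_pi_le_iff dist_nonneg]
  have hle : ∀ (x y : ι → ℝ) (i : ι), x i ≤ y i + dist x y := fun x y i => by
    have := dist_le_pi_dist x y i
    rw [Real.dist_eq] at this
    linarith [le_abs_self (x i - y i)]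
  intro i
  rw [Real.dist_eq, abs_sub_le_iff]
  constructor
  · linarith [le_add_const_of_topical htop hmono (hle x y) i]
  · linarith [le_add_const_of_topical htop hmono (hle y x) i, dist_comm x y]

theorem iterate_sub_const_of_topical (h : ℝ) (x : ι → ℝ) (k : ℕ) :
    (fun y i => f y i - h)^[k] x = fun i => f^[k] x i - k * h := by
  induction k with
  | zero => simp
  | succ k ih =>
    rw [iterate_succ_apply', ih, iterate_succ_apply']
    funext i
    simp only [sub_eq_add_neg, htop]
    push_cast
    ring

end Topical

theorem eigenvector_iff_bounded_trajectory_general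
    (n : ℕ) (f : (Fin n → ℝ) → (Fin n → ℝ))
    (htop : ∀ (x : Fin n → ℝ) (h : ℝ), f (fun i => x i + h) = fun i => f x i + h)
    (hmono : Monotone f)
    (h : ℝ) :
    (∃ v : Fin n → ℝ, f v = fun i => v i + h) ↔
      ∃ (x : Fin n → ℝ) (M : ℝ), 0 ≤ M ∧
        ∀ k : ℕ, ∀ i : Fin n, |f^[k] x i - k * h| ≤ M := by
  set g : (Fin n → ℝ) → Fin n → ℝ := fun y i => f y i - h with hg
  have hg_top : ∀ (x : Fin n → ℝ) (c : ℝ), g (fun i => x i + c) = fun i => g x i + c :=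
    fun x c => by funext i; simp only [hg, htop]; ring
  have hg_mono : Monotone g := fun x y hxy i => sub_le_sub_right (hmono hxy i) h
  have hfix : ∀ v, IsFixedPt g v ↔ f v = fun i => v i + h := fun v => by
    simp only [IsFixedPt, hg, funext_iff, sub_eq_iff_eq_add]
  have horbit := iterate_sub_const_of_topical htop h
  constructor
  · rintro ⟨v, hv⟩
    refine ⟨v, ‖v‖, norm_nonneg v, fun k i => ?_⟩
    rw [← congrFun (horbit v k) i, ((hfix v).2 hv).iterate k, ← Real.norm_eq_abs]
    exact norm_le_pi_norm v i
  · rintro ⟨x, M, hM, hbound⟩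
    have hx : IsBounded (range fun k => g^[k] x) := isBounded_iff_forall_norm_le.2
      ⟨M, forall_mem_range.2 fun k => (pi_norm_le_iff_of_nonneg hM).2 fun i => by
        rw [horbit, Real.norm_eq_abs]; exact hbound k i⟩
    obtain ⟨w, hw⟩ := exists_isFixedPt_of_isBounded_orbit hg_mono
      (lipschitzWith_one_of_topical hg_top hg_mono) hx
    exact ⟨w, (hfix w).1 hw⟩

theorem eigenvector_iff_bounded_trajectory
    (n : ℕ) (hn : 0 < n) (f : (Fin n → ℝ) → (Fin n → ℝ))
    (htop : ∀ (x : Fin n → ℝ) (h : ℝ), f (fun i => x i + h) = fun i => f x i + h)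
    (hmono : Monotone f)
    (h : ℝ) :
    (∃ v : Fin n → ℝ, f v = fun i => v i + h) ↔
      ∃ (x : Fin n → ℝ) (M : ℝ), 0 ≤ M ∧
        ∀ k : ℕ, ∀ i : Fin n, |f^[k] x i - k * h| ≤ M :=
  eigenvector_iff_bounded_trajectory_general n f htop hmono h
end

section
/- Let n be a positive integer and let f : ℝ^n → ℝ^n be a convex topical function. Then for all i, j ∈ {1,…,n}, the function u ↦ f_i(u·e_{{j}}) is unbounded above (i.e. there is an edge from i to j in the associated graph G(f)) if and only if f_i depends on the j-th coordinate, i.e. there exist x, y ∈ ℝ^n with x_k = y_k for all k ≠ j and f_i(x) ≠ f_i(y). -/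
private lemma aux_unbounded
    (n : ℕ) (f : (Fin n → ℝ) → (Fin n → ℝ))
    (htop : ∀ (x : Fin n → ℝ) (h : ℝ), f (fun i => x i + h) = fun i => f x i + h)
    (hmono : Monotone f)
    (hconv : ∀ i : Fin n, ConvexOn ℝ Set.univ fun x : Fin n → ℝ => f x i)
    (i j : Fin n) (z0 z1 : Fin n → ℝ)
    (heq : ∀ k, k ≠ j → z0 k = z1 k) (hj : z0 j < z1 j) (hf : f z0 i < f z1 i)
    (M : ℝ) : ∃ u : ℝ, M ≤ f (fun k => if k = j then u else 0) i := by
  set a := z0 j with ha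
  set b := z1 j with hb
  set d := b - a with hd
  have hdpos : 0 < d := by simp [hd]; linarith
  set ε := f z1 i - f z0 i with hε
  have hεpos : 0 < ε := by simp [hε]; linarith
  set m := ∑ k, |z0 k| with hm
  have hm0 : 0 ≤ m := Finset.sum_nonneg fun k _ => abs_nonneg _
  have hmk : ∀ k, z0 k ≤ m := by
    intro k
    calc z0 k ≤ |z0 k| := le_abs_self _
    _ ≤ m := Finset.single_le_sum (fun k _ => abs_nonneg (z0 k)) (Finset.mem_univ k)
  set r := max 1 ((M + m - f z0 i) / ε) with hr
  have hr1 : (1:ℝ) ≤ r := le_max_left _ _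
  have hr0 : 0 < r := lt_of_lt_of_le one_pos hr1
  have hr2 : M + m - f z0 i ≤ r * ε := by
    have := le_max_right 1 ((M + m - f z0 i) / ε)
    calc M + m - f z0 i = ((M + m - f z0 i) / ε) * ε := by field_simp
    _ ≤ r * ε := by
        apply mul_le_mul_of_nonneg_right _ hεpos.le
        exact this.trans (le_of_eq rfl) |>.trans_eq (by rw [hr])
  set t := a + d * r with htdef
  have hta : t - a = d * r := by rw [htdef]; ring
  have htapos : 0 < t - a := by rw [hta]; positivity
  have hbt : b ≤ t := by
    have : d * 1 ≤ d * r := mul_le_mul_of_nonneg_left hr1 hdpos.le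
    simp [htdef, hd] at this ⊢; linarith
  -- convex combination coefficients
  set cb := 1 / r with hcb
  set ca := 1 - cb with hca
  have hcbpos : 0 < cb := by positivity
  have hcb1 : cb ≤ 1 := by rw [hcb]; rw [div_le_one hr0]; exact hr1
  have hcanonneg : 0 ≤ ca := by simp [hca]; linarith
  have hsum : ca + cb = 1 := by simp [hca]
  set w : ℝ → Fin n → ℝ := fun s k => if k = j then s else z0 k with hw
  have hwa : w a = z0 := by
    funext k; by_cases hk : k = j <;> simp [hw, hk, ha]
  have hwb : w b = z1 := by
    funext k; by_cases hk : k = j <;> simp [hw, hk, hb]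
    exact heq k hk
  have hcomb : w b = ca • w a + cb • w t := by
    funext k
    by_cases hk : k = j
    · simp only [hw, hk, if_pos, Pi.add_apply, Pi.smul_apply, smul_eq_mul, if_true]
      rw [hca, hcb, htdef, hd]
      have hrne : r ≠ 0 := ne_of_gt hr0
      field_simp
      ring
    · simp only [hw, hk, if_neg, Pi.add_apply, Pi.smul_apply, smul_eq_mul, if_false]
      rw [hca]; ring
  have hconvex := (hconv i).2 (Set.mem_univ (w a)) (Set.mem_univ (w t))
      hcanonneg hcbpos.le hsum
  rw [← hcomb, hwa, hwb] at hconvex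
  simp only [smul_eq_mul] at hconvex
  -- f z1 i ≤ ca * f z0 i + cb * f (w t) i
  have hkey : M + m ≤ f (w t) i := by
    have h1 : ε ≤ cb * (f (w t) i - f z0 i) := by
      rw [hε, hca] at *
      nlinarith [hconvex]
    have h2 : r * ε ≤ f (w t) i - f z0 i := by
      have := mul_le_mul_of_nonneg_left h1 hr0.le
      rw [hcb] at this
      have hrne : r ≠ 0 := ne_of_gt hr0
      calc r * ε ≤ r * (1 / r * (f (w t) i - f z0 i)) := this
      _ = f (w t) i - f z0 i := by field_simp
    linarith [hr2]
  refine ⟨t, ?_⟩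
  have hle : w t ≤ fun k => (if k = j then t else 0) + m := by
    intro k
    by_cases hk : k = j
    · simp [hw, hk]; linarith [hm0]
    · simp [hw, hk]; exact hmk k
  have := hmono hle
  rw [htop (fun k => if k = j then t else 0) m] at this
  have := this i
  simp only at this
  linarith [hkey]

theorem graph_edge_iff_depends_of_convex
    (n : ℕ) (hn : 0 < n) (f : (Fin n → ℝ) → (Fin n → ℝ))
    (htop : ∀ (x : Fin n → ℝ) (h : ℝ), f (fun i => x i + h) = fun i => f x i + h)
    (hmono : Monotone f)
    (hconv : ∀ i : Fin n, ConvexOn ℝ Set.univ fun x : Fin n → ℝ => f x i)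
    (i j : Fin n) :
    (∀ M : ℝ, ∃ u : ℝ, M ≤ f (fun k => if k = j then u else 0) i) ↔
      ∃ x y : Fin n → ℝ, (∀ k, k ≠ j → x k = y k) ∧ f x i ≠ f y i := by
  constructor
  · intro h
    obtain ⟨u, hu⟩ := h (f (fun _ => 0) i + 1)
    refine ⟨fun k => if k = j then u else 0, fun _ => 0, fun k hk => by simp [hk], ?_⟩
    intro hcon
    rw [hcon] at hu
    linarith
  · rintro ⟨x, y, hxy, hne⟩ M
    rcases lt_trichotomy (x j) (y j) with h | h | h
    · have hxley : x ≤ y := by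
        intro k
        by_cases hk : k = j
        · subst hk; exact h.le
        · exact le_of_eq (hxy k hk)
      have hlt : f x i < f y i := lt_of_le_of_ne (hmono hxley i) hne
      exact aux_unbounded n f htop hmono hconv i j x y hxy h hlt M
    · exfalso
      apply hne
      congr 1
      funext k
      by_cases hk : k = j
      · subst hk; exact h
      · exact hxy k hk
    · have hylex : y ≤ x := by
        intro k
        by_cases hk : k = j
        · subst hk; exact h.le
        · exact (hxy k hk).symm.le
      have hlt : f y i < f x i := lt_of_le_of_ne (hmono hylex i) (Ne.symm hne)
      exact aux_unbounded n f htop hmono hconv i j y x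
        (fun k hk => (hxy k hk).symm) h hlt M
end

section
/- Let n be a positive integer and let f : ℝ^n → ℝ^n be a convex topical function. Then the aggregation of the associated graphs of f stabilises at the second step: every strongly connected component of the aggregated graph Γ(P_2) consists of a single vertex, so that P_k = P_2 for all k ≥ 2 and G^∞(f) = Γ(P_2) = G^2(f). -/
/-- The characteristic vector `e_J` of a set `J` of indices. -/
noncomputable def eVec {n : ℕ} (J : Set (Fin n)) : Fin n → ℝ :=
  J.indicator fun _ => 1

/-- A function `ℝ → ℝ` is unbounded above. -/
def Unbdd (g : ℝ → ℝ) : Prop := ∀ M : ℝ, ∃ u : ℝ, M ≤ g u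

/-- Edge of the aggregated graph `Γ(P)` from the block of `i` to the block of `j`,
where the partition `P` is encoded by the (equivalence) relation `r`. -/
def BlockEdge {n : ℕ} (f : (Fin n → ℝ) → (Fin n → ℝ)) (r : Fin n → Fin n → Prop)
    (i j : Fin n) : Prop :=
  ∃ i', r i i' ∧ Unbdd fun u => f (u • eVec {k | r j k}) i'

/-- The relation encoding the next partition `P_{k+1}`: two indices are related
iff their blocks lie in a common strongly connected component of `Γ(P_k)`. -/
def NextRel {n : ℕ} (f : (Fin n → ℝ) → (Fin n → ℝ)) (r : Fin n → Fin n → Prop) :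
    Fin n → Fin n → Prop :=
  fun i j => r i j ∨
    (Relation.ReflTransGen (BlockEdge f r) i j ∧ Relation.ReflTransGen (BlockEdge f r) j i)

/-!
Writing `u • e_J = centerMass (fun _ => 1) (fun j => (|J| u) • e_{j})`, convexity of `f_i` bounds
`f_i (u • e_J)` by `f_i ((|J| u) • e_{j})` for some `j ∈ J`. Hence an unbounded edge `I → J` of
`Γ(P₂)` leaves `I` at some `i` with `u ↦ f_i (u • e_{j})` unbounded for some `j ∈ J`, i.e. along an
edge of `Γ(P₁)`. Since the blocks of `P₂` are strongly connected in `Γ(P₁)`, every path in `Γ(P₂)`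
lifts to a path in `Γ(P₁)`, so a strongly connected component of `Γ(P₂)` lies inside one strongly
connected component of `Γ(P₁)`, which is a single block of `P₂`.
-/

open Relation Finset

lemma unbdd_iff_not_bddAbove (g : ℝ → ℝ) : Unbdd g ↔ ¬ BddAbove (Set.range g) := by
  rw [not_bddAbove_iff]
  refine ⟨fun h M => ?_, fun h M => ?_⟩
  · obtain ⟨u, hu⟩ := h (M + 1)
    exact ⟨g u, ⟨u, rfl⟩, by linarith⟩
  · obtain ⟨_, ⟨u, rfl⟩, hu⟩ := h M
    exact ⟨u, hu.le⟩

lemma sum_eVec_singleton {n : ℕ} (s : Finset (Fin n)) :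
    ∑ j ∈ s, eVec ({j} : Set (Fin n)) = eVec (s : Set (Fin n)) := by
  ext k
  simp [eVec, Set.indicator_apply, Finset.sum_apply]

lemma smul_eVec_eq_centerMass {n : ℕ} {s : Finset (Fin n)} (hs : s.Nonempty) (u : ℝ) :
    u • eVec (s : Set (Fin n)) =
      s.centerMass (fun _ => (1 : ℝ)) fun j => ((#s : ℝ) * u) • eVec ({j} : Set (Fin n)) := by
  have hcard : (#s : ℝ) ≠ 0 := by exact_mod_cast hs.card_pos.ne'
  simp only [centerMass, sum_const, nsmul_eq_mul, mul_one, ← smul_sum,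
    sum_eVec_singleton, smul_smul, ← mul_assoc, inv_mul_cancel₀ hcard, one_mul]

lemma ConvexOn.exists_unbdd_smul_eVec_singleton {n : ℕ} {g : (Fin n → ℝ) → ℝ}
    (hg : ConvexOn ℝ Set.univ g) {s : Finset (Fin n)} (hs : s.Nonempty)
    (h : Unbdd fun u => g (u • eVec (s : Set (Fin n)))) :
    ∃ j ∈ s, Unbdd fun u => g (u • eVec ({j} : Set (Fin n))) := by
  simp only [unbdd_iff_not_bddAbove] at h ⊢
  by_contra! hbdd
  obtain ⟨M, hM⟩ := (s.finite_toSet.bddAbove_biUnion).2 hbdd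
  refine h ⟨M, ?_⟩
  rintro _ ⟨u, rfl⟩
  obtain ⟨j, hj, hle⟩ := hg.exists_ge_of_centerMass (t := s) (w := fun _ => (1 : ℝ))
    (p := fun j => ((#s : ℝ) * u) • eVec ({j} : Set (Fin n)))
    (fun _ _ => zero_le_one) (by simpa using hs.card_pos) (fun _ _ => Set.mem_univ _)
  rw [← smul_eVec_eq_centerMass hs] at hle
  exact hle.trans (hM (Set.mem_biUnion (x := j) hj ⟨_, rfl⟩))

section Aggregation

variable {n : ℕ} (f : (Fin n → ℝ) → (Fin n → ℝ))

lemma blockEdge_eq_iff {i j : Fin n} :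
    BlockEdge f Eq i j ↔ Unbdd fun u => f (u • eVec ({j} : Set (Fin n))) i := by
  simp [BlockEdge]

lemma reflTransGen_blockEdge_eq_of_nextRel_eq {a b : Fin n} (h : NextRel f Eq a b) :
    ReflTransGen (BlockEdge f Eq) a b ∧ ReflTransGen (BlockEdge f Eq) b a := by
  rcases h with rfl | h
  exacts [⟨.refl, .refl⟩, h]

lemma reflTransGen_blockEdge_eq_of_blockEdge_nextRel
    (hconv : ∀ i : Fin n, ConvexOn ℝ Set.univ fun x : Fin n → ℝ => f x i) {b c : Fin n}
    (h : BlockEdge f (NextRel f Eq) b c) : ReflTransGen (BlockEdge f Eq) b c := by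
  obtain ⟨b', hbb', hunbdd⟩ := h
  set s := (Set.toFinite {k | NextRel f Eq c k}).toFinset
  obtain ⟨c', hc's, hedge⟩ := (hconv b').exists_unbdd_smul_eVec_singleton (s := s)
    ⟨c, by simp [s, NextRel]⟩ (by simpa [s] using hunbdd)
  have hcc' : NextRel f Eq c c' := by simpa [s] using hc's
  exact ((reflTransGen_blockEdge_eq_of_nextRel_eq f hbb').1.tail
    ((blockEdge_eq_iff f).2 hedge)).trans (reflTransGen_blockEdge_eq_of_nextRel_eq f hcc').2

lemma nextRel_eq_of_reflTransGen_blockEdge_nextRel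
    (hconv : ∀ i : Fin n, ConvexOn ℝ Set.univ fun x : Fin n → ℝ => f x i) {i j : Fin n}
    (hij : ReflTransGen (BlockEdge f (NextRel f Eq)) i j)
    (hji : ReflTransGen (BlockEdge f (NextRel f Eq)) j i) : NextRel f Eq i j :=
  have hlift := reflTransGen_closed fun _ _ =>
    reflTransGen_blockEdge_eq_of_blockEdge_nextRel f hconv
  Or.inr ⟨hlift _ _ hij, hlift _ _ hji⟩

lemma nextRel_eq_self {r : Fin n → Fin n → Prop}
    (hr : ∀ i j, ReflTransGen (BlockEdge f r) i j → ReflTransGen (BlockEdge f r) j i → r i j) :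
    NextRel f r = r := by
  ext i j
  exact ⟨fun h => h.elim id fun h => hr i j h.1 h.2, Or.inl⟩

end Aggregation

/-- `(NextRel f)^[k] Eq` encodes the partition `P_{k+1}`. -/
theorem aggregation_stabilises_at_two_of_convex_general
    (n : ℕ) (f : (Fin n → ℝ) → (Fin n → ℝ))
    (hconv : ∀ i : Fin n, ConvexOn ℝ Set.univ fun x : Fin n → ℝ => f x i) :
    (∀ i j : Fin n,
      Relation.ReflTransGen (BlockEdge f (NextRel f Eq)) i j →
      Relation.ReflTransGen (BlockEdge f (NextRel f Eq)) j i →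
      NextRel f Eq i j) ∧
    (∀ k : ℕ, 1 ≤ k → ∀ i j : Fin n,
      (NextRel f)^[k] Eq i j ↔ NextRel f Eq i j) := by
  have hscc := fun i j => nextRel_eq_of_reflTransGen_blockEdge_nextRel f hconv (i := i) (j := j)
  refine ⟨hscc, fun k hk i j => ?_⟩
  obtain ⟨k, rfl⟩ := Nat.exists_eq_add_of_le' hk
  rw [Function.iterate_succ_apply, Function.iterate_fixed (nextRel_eq_self f hscc)]

/-- For a convex topical function, aggregation stabilises at the second step:
every strongly connected component of `Γ(P₂)` is a single block (first
conjunct), whence `P_k = P₂` for all `k ≥ 2`, i.e. `(NextRel f)^[k-1] Eq`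
coincides with `P₂ = NextRel f Eq` (second conjunct: recall `P_{k+1}` is
encoded by `(NextRel f)^[k] Eq`), and thus `G^∞(f) = Γ(P₂) = G²(f)`. -/
theorem aggregation_stabilises_at_two_of_convex
    (n : ℕ) (hn : 0 < n) (f : (Fin n → ℝ) → (Fin n → ℝ))
    (htop : ∀ (x : Fin n → ℝ) (h : ℝ), f (fun i => x i + h) = fun i => f x i + h)
    (hmono : Monotone f)
    (hconv : ∀ i : Fin n, ConvexOn ℝ Set.univ fun x : Fin n → ℝ => f x i) :
    (∀ i j : Fin n,
      Relation.ReflTransGen (BlockEdge f (NextRel f Eq)) i j →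
      Relation.ReflTransGen (BlockEdge f (NextRel f Eq)) j i →
      NextRel f Eq i j) ∧
    (∀ k : ℕ, 1 ≤ k → ∀ i j : Fin n,
      (NextRel f)^[k] Eq i j ↔ NextRel f Eq i j) :=
  aggregation_stabilises_at_two_of_convex_general n f hconv
end

section
/- Let n be a positive integer and let f : ℝ^n → ℝ^n be a topical function such that for every x ∈ ℝ^n the limit f̂(x) = lim_{t→∞} f(t·x)/t exists (f̂ is the recession function of f). Suppose that every eigenvector of f̂ is trivial, i.e. whenever f̂(y) = y + h·𝟙 for some y ∈ ℝ^n and h ∈ ℝ, the vector y is a scalar multiple of 𝟙 (all its coordinates are equal). Then for all λ, μ ∈ ℝ the slice space S^λ_μ(f) = {x ∈ ℝ^n : x + μ·𝟙 ≤ f(x) ≤ x + λ·𝟙} is bounded in the Hilbert semi-norm. -/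
open Filter

/-- `⊥(x) = min_i x_i`. -/
noncomputable def botV {n : ℕ} (x : Fin n → ℝ) : ℝ := ⨅ i, x i

theorem slice_spaces_bounded_of_recession_rigid_additive
    (n : ℕ) (hn : 0 < n) (f fhat : (Fin n → ℝ) → (Fin n → ℝ))
    (htop : ∀ (x : Fin n → ℝ) (h : ℝ), f (fun i => x i + h) = fun i => f x i + h)
    (hmono : Monotone f)
    -- the recession function exists: `f̂(x) = lim_{t→∞} f(t·x)/t`
    (hrec : ∀ (x : Fin n → ℝ) (i : Fin n),
      Tendsto (fun t : ℝ => f (t • x) i / t) atTop (nhds (fhat x i)))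
    -- every eigenvector of `f̂` is trivial (all coordinates equal)
    (huniq : ∀ (y : Fin n → ℝ) (h : ℝ),
      fhat y = (fun i => y i + h) → ∃ c : ℝ, y = fun _ => c) :
    ∀ lam mu : ℝ, ∃ M : ℝ,
      ∀ x : Fin n → ℝ,
        (∀ i, x i + mu ≤ f x i) → (∀ i, f x i ≤ x i + lam) →
        topV x - botV x ≤ M := by
  intro lam mu
  by_contra hM
  push_neg at hM
  haveI : Nonempty (Fin n) := Fin.pos_iff_nonempty.mp hn
  choose X hX1 hX2 hX3 using fun k : ℕ => hM ((k : ℝ) + 1)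
  -- nonexpansiveness of `f` in the sup norm
  have hne : ∀ a b : Fin n → ℝ, ∀ i, f a i ≤ f b i + ‖a - b‖ := by
    intro a b i
    have h1 : a ≤ fun j => b j + ‖a - b‖ := by
      intro j
      show a j ≤ b j + ‖a - b‖
      have h2 : ‖(a - b) j‖ ≤ ‖a - b‖ := norm_le_pi_norm (a - b) j
      have h3 : |a j - b j| ≤ ‖a - b‖ := by
        simpa [Real.norm_eq_abs] using h2
      have := le_abs_self (a j - b j)
      linarith
    have := hmono h1 i
    rwa [htop b ‖a - b‖] at this
  set b : ℕ → ℝ := fun k => botV (X k) with hb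
  set t : ℕ → ℝ := fun k => topV (X k) - botV (X k) with htdef
  have ht : ∀ k : ℕ, (k : ℝ) + 1 < t k := fun k => hX3 k
  have htpos : ∀ k, 0 < t k := by
    intro k
    have h1 := ht k
    have h2 : (0:ℝ) ≤ (k:ℝ) := Nat.cast_nonneg k
    linarith
  set z : ℕ → Fin n → ℝ := fun k i => X k i - b k with hz
  have hz0 : ∀ k i, 0 ≤ z k i := by
    intro k i
    have : botV (X k) ≤ X k i := ciInf_le (Set.finite_range (X k)).bddBelow i
    simp only [hz]
    linarith
  have hzt : ∀ k i, z k i ≤ t k := by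
    intro k i
    have : X k i ≤ topV (X k) := le_ciSup (Set.finite_range (X k)).bddAbove i
    simp only [hz, htdef, hb]
    linarith
  have hfz : ∀ k, f (z k) = fun i => f (X k) i - b k := by
    intro k
    have h1 : z k = fun i => X k i + (-(b k)) := by
      funext i; simp [hz]; ring
    rw [h1, htop (X k) (-(b k))]
    funext i; ring
  have hzl : ∀ k i, z k i + mu ≤ f (z k) i := by
    intro k i
    rw [hfz k]
    have := hX1 k i
    simp only [hz]
    linarith
  have hzu : ∀ k i, f (z k) i ≤ z k i + lam := by
    intro k i
    rw [hfz k]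
    have := hX2 k i
    simp only [hz]
    linarith
  set Y : ℕ → Fin n → ℝ := fun k i => z k i / t k with hY
  have hYmem : ∀ k, Y k ∈ Set.Icc (0 : Fin n → ℝ) 1 := by
    intro k
    constructor
    · intro i
      exact div_nonneg (hz0 k i) (htpos k).le
    · intro i
      have := hzt k i
      simp only [hY, Pi.one_apply]
      rw [div_le_one (htpos k)]
      exact this
  obtain ⟨y, hyK, φ, hφ, hconv⟩ := isCompact_Icc.tendsto_subseq hYmem
  -- the subsequence of scales tends to infinity
  have hT : Tendsto (fun j => t (φ j)) atTop atTop := by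
    apply tendsto_atTop_mono (fun j => ?_) tendsto_natCast_atTop_atTop
    have h1 : (j : ℝ) ≤ (φ j : ℝ) := Nat.cast_le.mpr hφ.le_apply
    have := ht (φ j)
    linarith
  have hTpos : ∀ j, 0 < t (φ j) := fun j => htpos (φ j)
  have hpt : ∀ i, Tendsto (fun j => Y (φ j) i) atTop (nhds (y i)) := by
    intro i
    exact (tendsto_pi_nhds.mp hconv) i
  have hdist : Tendsto (fun j => ‖Y (φ j) - y‖) atTop (nhds 0) := by
    rw [← tendsto_iff_norm_sub_tendsto_zero]
    exact hconv
  have hzeq : ∀ j, z (φ j) = t (φ j) • Y (φ j) := by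
    intro j
    funext i
    simp only [hY, Pi.smul_apply, smul_eq_mul]
    rw [mul_div_cancel₀ _ (htpos (φ j)).ne']
  -- limit 2 : f(z_{φ j}) i / t_{φ j} → y i
  have hlim2 : ∀ i, Tendsto (fun j => f (z (φ j)) i / t (φ j)) atTop (nhds (y i)) := by
    intro i
    have hlow : Tendsto (fun j => Y (φ j) i + mu / t (φ j)) atTop (nhds (y i)) := by
      have := (hpt i).add (tendsto_const_nhds.div_atTop hT (f := fun _ : ℕ => mu))
      simpa using this
    have hup : Tendsto (fun j => Y (φ j) i + lam / t (φ j)) atTop (nhds (y i)) := by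
      have := (hpt i).add (tendsto_const_nhds.div_atTop hT (f := fun _ : ℕ => lam))
      simpa using this
    apply tendsto_of_tendsto_of_tendsto_of_le_of_le hlow hup
    · intro j
      have h1 := hzl (φ j) i
      calc Y (φ j) i + mu / t (φ j) = (z (φ j) i + mu) / t (φ j) := by
            simp only [hY]; rw [add_div]
        _ ≤ f (z (φ j)) i / t (φ j) := (div_le_div_iff_of_pos_right (hTpos j)).mpr h1
    · intro j
      have h1 := hzu (φ j) i
      calc f (z (φ j)) i / t (φ j) ≤ (z (φ j) i + lam) / t (φ j) :=
            (div_le_div_iff_of_pos_right (hTpos j)).mpr h1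
        _ = Y (φ j) i + lam / t (φ j) := by
            simp only [hY]; rw [add_div]
  -- limit 3 : f(t_{φ j} • y) i / t_{φ j} → y i
  have hlim3 : ∀ i, Tendsto (fun j => f (t (φ j) • y) i / t (φ j)) atTop (nhds (y i)) := by
    intro i
    have hnorm : ∀ j, ‖t (φ j) • y - z (φ j)‖ = t (φ j) * ‖Y (φ j) - y‖ := by
      intro j
      rw [hzeq j, ← smul_sub]
      rw [norm_smul]
      rw [Real.norm_eq_abs, abs_of_pos (hTpos j), ← norm_neg, neg_sub]
    have hlow : Tendsto (fun j => f (z (φ j)) i / t (φ j) - ‖Y (φ j) - y‖) atTop (nhds (y i)) := by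
      have := (hlim2 i).sub hdist
      simpa using this
    have hup : Tendsto (fun j => f (z (φ j)) i / t (φ j) + ‖Y (φ j) - y‖) atTop (nhds (y i)) := by
      have := (hlim2 i).add hdist
      simpa using this
    apply tendsto_of_tendsto_of_tendsto_of_le_of_le hlow hup
    · intro j
      have h1 := hne (z (φ j)) (t (φ j) • y) i
      have h2 : ‖z (φ j) - t (φ j) • y‖ = t (φ j) * ‖Y (φ j) - y‖ := by
        rw [← hnorm j, ← norm_neg, neg_sub]
      rw [h2] at h1
      have h3 : f (z (φ j)) i / t (φ j) ≤
          (f (t (φ j) • y) i + t (φ j) * ‖Y (φ j) - y‖) / t (φ j) :=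
        (div_le_div_iff_of_pos_right (hTpos j)).mpr h1
      have h4 : (f (t (φ j) • y) i + t (φ j) * ‖Y (φ j) - y‖) / t (φ j)
          = f (t (φ j) • y) i / t (φ j) + ‖Y (φ j) - y‖ := by
        rw [add_div, mul_div_cancel_left₀ _ (hTpos j).ne']
      rw [h4] at h3
      linarith
    · intro j
      have h1 := hne (t (φ j) • y) (z (φ j)) i
      rw [hnorm j] at h1
      have h3 : f (t (φ j) • y) i / t (φ j) ≤
          (f (z (φ j)) i + t (φ j) * ‖Y (φ j) - y‖) / t (φ j) :=
        (div_le_div_iff_of_pos_right (hTpos j)).mpr h1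
      have h4 : (f (z (φ j)) i + t (φ j) * ‖Y (φ j) - y‖) / t (φ j)
          = f (z (φ j)) i / t (φ j) + ‖Y (φ j) - y‖ := by
        rw [add_div, mul_div_cancel_left₀ _ (hTpos j).ne']
      rw [h4] at h3
      linarith
  -- limit 1 : f(t_{φ j} • y) i / t_{φ j} → fhat y i
  have hlim1 : ∀ i, Tendsto (fun j => f (t (φ j) • y) i / t (φ j)) atTop (nhds (fhat y i)) :=
    fun i => (hrec y i).comp hT
  have heig : fhat y = fun i => y i + 0 := by
    funext i
    have := tendsto_nhds_unique (hlim1 i) (hlim3 i)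
    simpa using this
  obtain ⟨c, hc⟩ := huniq y 0 heig
  -- derive a contradiction: eventually the normalized points are close to a constant
  obtain ⟨j, h4⟩ : ∃ j, ‖Y (φ j) - y‖ < 1/4 :=
    (hdist.eventually_lt_const (by norm_num : (0:ℝ) < 1/4)).exists
  set k := φ j with hk
  obtain ⟨imax, hmax⟩ := Finite.exists_max (X k)
  obtain ⟨imin, hmin⟩ := Finite.exists_min (X k)
  have h5 : topV (X k) ≤ X k imax := ciSup_le hmax
  have h6 : X k imin ≤ botV (X k) := le_ciInf hmin
  have h7 : t k ≤ z k imax - z k imin := by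
    simp only [htdef, hz]
    linarith
  have habs : ∀ i, |Y k i - c| ≤ ‖Y k - y‖ := by
    intro i
    have h2 : ‖(Y k - y) i‖ ≤ ‖Y k - y‖ := norm_le_pi_norm (Y k - y) i
    have h3 : y i = c := by rw [hc]
    simpa [Real.norm_eq_abs, h3] using h2
  have h8 : Y k imax - Y k imin < 1/2 := by
    have ha := abs_le.mp (habs imax)
    have hb := abs_le.mp (habs imin)
    linarith [ha.1, ha.2, hb.1, hb.2, h4]
  have h9 : z k imax - z k imin = t k * (Y k imax - Y k imin) := by
    simp only [hY]
    have hne0 : t k ≠ 0 := (htpos k).ne'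
    field_simp
  have h10 : t k * (Y k imax - Y k imin) ≤ t k * (1/2) :=
    mul_le_mul_of_nonneg_left h8.le (htpos k).le
  have h11 := htpos k
  rw [h9] at h7
  have h12 : t k ≤ t k * (1/2) := le_trans h7 h10
  nlinarith [h11, h12]
end
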